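/- arXiv:2512.05713 — 6 statements merged into one kernel-verified Lean document; each statement's English description precedes it below -/
import Mathlib

section
/- For fixed diagonal entries ρ00, ρ11 ≥ 0 with ρ00 + ρ11 = 1, 0 < ρ11 < 1, and fixed damping parameter g ∈ (0,1), the single-photon randomness function c ↦ R(c) is strictly increasing on the interval 0 ≤ c ≤ √(ρ00·ρ11). -/
set_option maxHeartbeats 1000000

/-- The single-photon randomness function `R(c)` from Eq. (17) of the paper,
with entropies in bits (`Real.logb 2`, which satisfies the convention
`0 · log₂ 0 = 0` since `Real.logb 2 0 = 0`). -/
noncomputable def RandSP (ρ00 ρ11 g c : ℝ) : ℝ :=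
  let Δ := Real.sqrt ((ρ11 - ρ00) ^ 2 + 4 * c ^ 2)
  let S := -(((1 + Δ) / 2) * Real.logb 2 ((1 + Δ) / 2))
           - ((1 - Δ) / 2) * Real.logb 2 ((1 - Δ) / 2)
  let F := ρ00 + g * ρ11
  let Δ' := Real.sqrt ((ρ00 - g * ρ11) ^ 2 + 4 * g * c ^ 2)
  let μ1 := (F + Δ') / 2
  let μ2 := (F - Δ') / 2;
  -S - ρ11 * (1 - g) * Real.logb 2 (ρ11 * (1 - g))
    - μ1 * Real.logb 2 μ1 - μ2 * Real.logb 2 μ2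

open Real Set



/-- The logarithmic mean `(x-y)/(log x - log y)` is strictly increasing in the
larger argument. -/
lemma lm_mono_left {y x x' : ℝ} (hy : 0 < y) (h1 : y < x) (h2 : x < x') :
    (x - y) / (Real.log x - Real.log y) < (x' - y) / (Real.log x' - Real.log y) := by
  have key : StrictMonoOn (fun z => (z - y) / (Real.log z - Real.log y)) (Set.Ici x) := by
    apply strictMonoOn_of_deriv_pos (convex_Ici x)
    · apply ContinuousOn.div
      · fun_prop
      · exact ContinuousOn.sub (Real.continuousOn_log.mono (fun z hz => by
          simp only [mem_Ici] at hz
          exact ne_of_gt (lt_of_lt_of_le (hy.trans h1) hz))) continuousOn_const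
      · intro z hz
        simp only [mem_Ici] at hz
        have : Real.log y < Real.log z := Real.log_lt_log hy (lt_of_lt_of_le h1 hz)
        linarith
    · intro z hz
      rw [interior_Ici, mem_Ioi] at hz
      have hz0 : 0 < z := hy.trans (h1.trans hz)
      have hyz : y < z := h1.trans hz
      have hlog : Real.log y < Real.log z := Real.log_lt_log hy hyz
      have hd : HasDerivAt (fun z => (z - y) / (Real.log z - Real.log y))
          ((1 * (Real.log z - Real.log y) - (z - y) * z⁻¹) / (Real.log z - Real.log y) ^ 2) z :=
        ((hasDerivAt_id z).sub_const y).div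
          ((Real.hasDerivAt_log (ne_of_gt hz0)).sub_const (Real.log y)) (by linarith)
      rw [hd.deriv]
      apply div_pos
      · have hl : Real.log (y / z) < y / z - 1 :=
          Real.log_lt_sub_one_of_pos (div_pos hy hz0) (by
            intro h; rw [div_eq_one_iff_eq (ne_of_gt hz0)] at h; linarith)
        rw [Real.log_div (ne_of_gt hy) (ne_of_gt hz0)] at hl
        have h2' : (z - y) * z⁻¹ = 1 - y / z := by field_simp
        rw [h2']
        linarith
      · exact pow_pos (by linarith) 2
  exact key (le_refl x) (le_of_lt h2) h2

/-- The logarithmic mean is monotone in the smaller argument. -/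
lemma lm_mono_right {x y y' : ℝ} (hy : 0 < y) (h1 : y ≤ y') (h2 : y' < x) :
    (x - y) / (Real.log x - Real.log y) ≤ (x - y') / (Real.log x - Real.log y') := by
  rcases eq_or_lt_of_le h1 with rfl | h1
  · rfl
  have hx0 : 0 < x := hy.trans (h1.trans h2)
  have key : StrictMonoOn (fun z => (x - z) / (Real.log x - Real.log z)) (Set.Icc y y') := by
    apply strictMonoOn_of_deriv_pos (convex_Icc y y')
    · apply ContinuousOn.div
      · fun_prop
      · exact ContinuousOn.sub continuousOn_const (Real.continuousOn_log.mono (fun z hz =>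
          ne_of_gt (lt_of_lt_of_le hy hz.1)))
      · intro z hz
        have : Real.log z < Real.log x := Real.log_lt_log (lt_of_lt_of_le hy hz.1)
          (lt_of_le_of_lt hz.2 h2)
        linarith
    · intro z hz
      rw [interior_Icc] at hz
      have hz0 : 0 < z := hy.trans hz.1
      have hzx : z < x := hz.2.trans h2
      have hlog : Real.log z < Real.log x := Real.log_lt_log hz0 hzx
      have hd : HasDerivAt (fun z => (x - z) / (Real.log x - Real.log z))
          ((-1 * (Real.log x - Real.log z) - (x - z) * -z⁻¹) / (Real.log x - Real.log z) ^ 2) z :=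
        ((hasDerivAt_id z).const_sub x).div
          ((Real.hasDerivAt_log (ne_of_gt hz0)).const_sub (Real.log x)) (by linarith)
      rw [hd.deriv]
      apply div_pos
      · have hl : Real.log (x / z) < x / z - 1 :=
          Real.log_lt_sub_one_of_pos (div_pos hx0 hz0) (by
            intro h; rw [div_eq_one_iff_eq (ne_of_gt hz0)] at h; linarith)
        rw [Real.log_div (ne_of_gt hx0) (ne_of_gt hz0)] at hl
        have hnum : -1 * (Real.log x - Real.log z) - (x - z) * -z⁻¹
            = (x / z - 1) - (Real.log x - Real.log z) := by field_simp; ring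
        rw [hnum]
        linarith
      · exact pow_pos (by linarith) 2
  exact le_of_lt (key (left_mem_Icc.2 (le_of_lt h1)) (right_mem_Icc.2 (le_of_lt h1)) h1)

lemma key_ineq {g l1 l2 m1 m2 : ℝ} (hl2 : 0 < l2) (hl12 : l2 < l1) (hg : 0 < g)
    (h1 : g * l1 < m1) (h2 : g * l2 ≤ m2) (hm : m2 < m1) :
    g * (Real.log m1 - Real.log m2) / (m1 - m2)
      < (Real.log l1 - Real.log l2) / (l1 - l2) := by
  have hgl2 : 0 < g * l2 := mul_pos hg hl2
  have hgl12 : g * l2 < g * l1 := by nlinarith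
  have hm2 : 0 < m2 := lt_of_lt_of_le hgl2 h2
  have hm1 : 0 < m1 := hm2.trans hm
  have hA : 0 < Real.log l1 - Real.log l2 :=
    sub_pos.2 (Real.log_lt_log hl2 hl12)
  have hB : 0 < Real.log m1 - Real.log m2 :=
    sub_pos.2 (Real.log_lt_log hm2 hm)
  have e1 : (g * l1 - g * l2) / (Real.log (g * l1) - Real.log (g * l2))
      = g * (l1 - l2) / (Real.log l1 - Real.log l2) := by
    rw [Real.log_mul (ne_of_gt hg) (ne_of_gt (hl2.trans hl12)),
        Real.log_mul (ne_of_gt hg) (ne_of_gt hl2)]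
    rw [show Real.log g + Real.log l1 - (Real.log g + Real.log l2)
        = Real.log l1 - Real.log l2 by ring]
    ring_nf
  have e2 := lm_mono_left hgl2 hgl12 h1
  have e3 := lm_mono_right hgl2 h2 hm
  have X : g * (l1 - l2) / (Real.log l1 - Real.log l2)
      < (m1 - m2) / (Real.log m1 - Real.log m2) := by
    rw [← e1]; exact lt_of_lt_of_le e2 e3
  rw [div_lt_div_iff₀ hA hB] at X
  rw [div_lt_div_iff₀ (by linarith : (0:ℝ) < m1 - m2) (by linarith : (0:ℝ) < l1 - l2)]
  nlinarith [X]



noncomputable def Nfun (ρ00 ρ11 g q : ℝ) : ℝ :=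
  ((1 + Real.sqrt (1 - 4 * q)) / 2) * Real.log ((1 + Real.sqrt (1 - 4 * q)) / 2)
  + ((1 - Real.sqrt (1 - 4 * q)) / 2) * Real.log ((1 - Real.sqrt (1 - 4 * q)) / 2)
  - (((ρ00 + g * ρ11) + Real.sqrt ((ρ00 + g * ρ11) ^ 2 - 4 * g * q)) / 2)
      * Real.log (((ρ00 + g * ρ11) + Real.sqrt ((ρ00 + g * ρ11) ^ 2 - 4 * g * q)) / 2)
  - (((ρ00 + g * ρ11) - Real.sqrt ((ρ00 + g * ρ11) ^ 2 - 4 * g * q)) / 2)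
      * Real.log (((ρ00 + g * ρ11) - Real.sqrt ((ρ00 + g * ρ11) ^ 2 - 4 * g * q)) / 2)

lemma Nfun_continuous (ρ00 ρ11 g : ℝ) : Continuous (Nfun ρ00 ρ11 g) := by
  unfold Nfun
  have hml := Real.continuous_mul_log
  have h1 : Continuous fun q : ℝ => (1 + Real.sqrt (1 - 4 * q)) / 2 := by
    apply Continuous.div_const
    exact continuous_const.add (Real.continuous_sqrt.comp (by continuity))
  have h2 : Continuous fun q : ℝ => (1 - Real.sqrt (1 - 4 * q)) / 2 := by
    apply Continuous.div_const
    exact continuous_const.sub (Real.continuous_sqrt.comp (by continuity))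
  have h3 : Continuous fun q : ℝ => ((ρ00 + g * ρ11) + Real.sqrt ((ρ00 + g * ρ11) ^ 2 - 4 * g * q)) / 2 := by
    apply Continuous.div_const
    exact continuous_const.add (Real.continuous_sqrt.comp (by continuity))
  have h4 : Continuous fun q : ℝ => ((ρ00 + g * ρ11) - Real.sqrt ((ρ00 + g * ρ11) ^ 2 - 4 * g * q)) / 2 := by
    apply Continuous.div_const
    exact continuous_const.sub (Real.continuous_sqrt.comp (by continuity))
  exact (((hml.comp h1).add (hml.comp h2)).sub (hml.comp h3)).sub (hml.comp h4)

lemma Nfun_strictAntiOn (ρ00 ρ11 g : ℝ) (hsum : ρ00 + ρ11 = 1)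
    (h11pos : 0 < ρ11) (h11lt : ρ11 < 1) (hg0 : 0 < g) (hg1 : g < 1) :
    StrictAntiOn (Nfun ρ00 ρ11 g) (Set.Icc 0 (ρ00 * ρ11)) := by
  have hr : ρ11 = 1 - ρ00 := by linarith
  subst hr
  have hρ0 : 0 < ρ00 := by linarith
  have hρ1 : ρ00 < 1 := by linarith
  apply strictAntiOn_of_deriv_neg (convex_Icc _ _)
    ((Nfun_continuous _ _ _).continuousOn)
  intro q hq
  rw [interior_Icc] at hq
  obtain ⟨hq0, hqp⟩ := hq
  -- basic bounds for s = √(1-4q)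
  have h14q : 0 < 1 - 4 * q := by nlinarith [sq_nonneg (ρ00 - (1 - ρ00))]
  have hs0 : 0 < Real.sqrt (1 - 4 * q) := Real.sqrt_pos.2 h14q
  have hss : Real.sqrt (1 - 4 * q) ^ 2 = 1 - 4 * q := Real.sq_sqrt h14q.le
  set s := Real.sqrt (1 - 4 * q) with hsdef
  have hs1 : s < 1 := by nlinarith [sq_nonneg (s - 1)]
  -- bounds for t = √(F² - 4gq), F = ρ00 + g(1-ρ00)
  have ht2 : 0 < (ρ00 + g * (1 - ρ00)) ^ 2 - 4 * g * q := by
    nlinarith [sq_nonneg (ρ00 - g * (1 - ρ00)), mul_pos hg0 (sub_pos.2 hqp)]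
  have ht0 : 0 < Real.sqrt ((ρ00 + g * (1 - ρ00)) ^ 2 - 4 * g * q) := Real.sqrt_pos.2 ht2
  have htt : Real.sqrt ((ρ00 + g * (1 - ρ00)) ^ 2 - 4 * g * q) ^ 2
      = (ρ00 + g * (1 - ρ00)) ^ 2 - 4 * g * q := Real.sq_sqrt ht2.le
  set t := Real.sqrt ((ρ00 + g * (1 - ρ00)) ^ 2 - 4 * g * q) with htdef
  have hF0 : 0 < ρ00 + g * (1 - ρ00) := by nlinarith
  have htF : t < ρ00 + g * (1 - ρ00) := by
    apply lt_of_pow_lt_pow_left₀ 2 hF0.le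
    nlinarith [mul_pos hg0 hq0]
  -- spectral inequality (c) : g * (1+s)/2 < (F+t)/2
  have hsge : 1 - 2 * ρ00 < s := by
    rcases le_or_gt (1 - 2 * ρ00) 0 with h | h
    · linarith
    · apply lt_of_pow_lt_pow_left₀ 2 hs0.le
      rw [hss]; nlinarith
  have hkey1 : 0 < ρ00 - 2 * q + ρ00 * s := by
    nlinarith [mul_lt_mul_of_pos_left hsge hρ0]
  have hc : g * ((1 + s) / 2) < (ρ00 + g * (1 - ρ00) + t) / 2 := by
    rcases le_or_gt (g * s - (1 - g) * ρ00) 0 with h | h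
    · linarith
    · have hss2 : g ^ 2 * s ^ 2 = g ^ 2 * (1 - 4 * q) := by rw [hss]
      have hX2 : (g * s - (1 - g) * ρ00) ^ 2 < t ^ 2 := by
        rw [htt]
        nlinarith [mul_pos (mul_pos hg0 (sub_pos.2 hg1)) hkey1, hss2]
      have := lt_of_pow_lt_pow_left₀ 2 ht0.le hX2
      linarith
  -- spectral inequality (d) : g * (1-s)/2 ≤ (F-t)/2
  have hkey2 : ρ00 - 2 * q ≤ ρ00 * s := by
    rcases le_or_gt (ρ00 - 2 * q) 0 with h | h
    · nlinarith [mul_pos hρ0 hs0]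
    · apply le_of_pow_le_pow_left₀ two_ne_zero (mul_nonneg hρ0.le hs0.le)
      have hss3 : ρ00 ^ 2 * s ^ 2 = ρ00 ^ 2 * (1 - 4 * q) := by rw [hss]
      nlinarith [hss3, mul_pos hq0 (sub_pos.2 hqp)]
  have hd : g * ((1 - s) / 2) ≤ (ρ00 + g * (1 - ρ00) - t) / 2 := by
    have ht' : t ≤ (1 - g) * ρ00 + g * s := by
      apply le_of_pow_le_pow_left₀ two_ne_zero (by nlinarith [mul_pos hg0 hs0])
      rw [htt]
      have hss2 : g ^ 2 * s ^ 2 = g ^ 2 * (1 - 4 * q) := by rw [hss]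
      nlinarith [mul_nonneg (mul_nonneg hg0.le (sub_pos.2 hg1).le)
        (by linarith : (0:ℝ) ≤ ρ00 * s - ρ00 + 2 * q), hss2]
    linarith
  -- derivative computation
  have hinner1 : HasDerivAt (fun x : ℝ => 1 - 4 * x) (-4 : ℝ) q := by
    simpa using ((hasDerivAt_id q).const_mul (4 : ℝ)).const_sub 1
  have hs' : HasDerivAt (fun x : ℝ => Real.sqrt (1 - 4 * x)) (1 / (2 * s) * (-4)) q := by
    have h := (Real.hasDerivAt_sqrt (ne_of_gt h14q)).comp q hinner1
    simpa [Function.comp_def, ← hsdef] using h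
  have hinner2 : HasDerivAt (fun x : ℝ => (ρ00 + g * (1 - ρ00)) ^ 2 - 4 * g * x)
      (-(4 * g)) q := by
    simpa using ((hasDerivAt_id q).const_mul (4 * g)).const_sub ((ρ00 + g * (1 - ρ00)) ^ 2)
  have ht' : HasDerivAt (fun x : ℝ => Real.sqrt ((ρ00 + g * (1 - ρ00)) ^ 2 - 4 * g * x))
      (1 / (2 * t) * -(4 * g)) q := by
    have h := (Real.hasDerivAt_sqrt (ne_of_gt ht2)).comp q hinner2
    simpa [Function.comp_def, ← htdef] using h
  have hl1pos : (0:ℝ) < (1 + s) / 2 := by linarith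
  have hl2pos : (0: ℝ) < (1 - s) / 2 := by linarith
  have hm1pos : (0:ℝ) < (ρ00 + g * (1 - ρ00) + t) / 2 := by linarith
  have hm2pos : (0:ℝ) < (ρ00 + g * (1 - ρ00) - t) / 2 := by linarith
  have hA : HasDerivAt (fun x : ℝ => ((1 + Real.sqrt (1 - 4 * x)) / 2)
        * Real.log ((1 + Real.sqrt (1 - 4 * x)) / 2))
      ((Real.log ((1 + s) / 2) + 1) * (1 / (2 * s) * (-4) / 2)) q := by
    have hlam : HasDerivAt (fun x : ℝ => (1 + Real.sqrt (1 - 4 * x)) / 2)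
        (1 / (2 * s) * (-4) / 2) q := (hs'.const_add 1).div_const 2
    have h := (Real.hasDerivAt_mul_log (ne_of_gt hl1pos)).comp q hlam
    simpa [Function.comp_def] using h
  have hB : HasDerivAt (fun x : ℝ => ((1 - Real.sqrt (1 - 4 * x)) / 2)
        * Real.log ((1 - Real.sqrt (1 - 4 * x)) / 2))
      ((Real.log ((1 - s) / 2) + 1) * (-(1 / (2 * s) * (-4)) / 2)) q := by
    have hlam : HasDerivAt (fun x : ℝ => (1 - Real.sqrt (1 - 4 * x)) / 2)
        (-(1 / (2 * s) * (-4)) / 2) q := (hs'.const_sub 1).div_const 2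
    have h := (Real.hasDerivAt_mul_log (ne_of_gt hl2pos)).comp q hlam
    simpa [Function.comp_def] using h
  have hC : HasDerivAt (fun x : ℝ => (((ρ00 + g * (1 - ρ00))
          + Real.sqrt ((ρ00 + g * (1 - ρ00)) ^ 2 - 4 * g * x)) / 2)
        * Real.log (((ρ00 + g * (1 - ρ00))
          + Real.sqrt ((ρ00 + g * (1 - ρ00)) ^ 2 - 4 * g * x)) / 2))
      ((Real.log ((ρ00 + g * (1 - ρ00) + t) / 2) + 1) * (1 / (2 * t) * -(4 * g) / 2)) q := by
    have hlam : HasDerivAt (fun x : ℝ => ((ρ00 + g * (1 - ρ00))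
          + Real.sqrt ((ρ00 + g * (1 - ρ00)) ^ 2 - 4 * g * x)) / 2)
        (1 / (2 * t) * -(4 * g) / 2) q := (ht'.const_add _).div_const 2
    have h := (Real.hasDerivAt_mul_log (ne_of_gt hm1pos)).comp q hlam
    simpa [Function.comp_def] using h
  have hD : HasDerivAt (fun x : ℝ => (((ρ00 + g * (1 - ρ00))
          - Real.sqrt ((ρ00 + g * (1 - ρ00)) ^ 2 - 4 * g * x)) / 2)
        * Real.log (((ρ00 + g * (1 - ρ00))
          - Real.sqrt ((ρ00 + g * (1 - ρ00)) ^ 2 - 4 * g * x)) / 2))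
      ((Real.log ((ρ00 + g * (1 - ρ00) - t) / 2) + 1) * (-(1 / (2 * t) * -(4 * g)) / 2)) q := by
    have hlam : HasDerivAt (fun x : ℝ => ((ρ00 + g * (1 - ρ00))
          - Real.sqrt ((ρ00 + g * (1 - ρ00)) ^ 2 - 4 * g * x)) / 2)
        (-(1 / (2 * t) * -(4 * g)) / 2) q := (ht'.const_sub _).div_const 2
    have h := (Real.hasDerivAt_mul_log (ne_of_gt hm2pos)).comp q hlam
    simpa [Function.comp_def] using h
  have hN : HasDerivAt (Nfun ρ00 (1 - ρ00) g)
      ((Real.log ((1 + s) / 2) + 1) * (1 / (2 * s) * (-4) / 2)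
       + (Real.log ((1 - s) / 2) + 1) * (-(1 / (2 * s) * (-4)) / 2)
       - (Real.log ((ρ00 + g * (1 - ρ00) + t) / 2) + 1) * (1 / (2 * t) * -(4 * g) / 2)
       - (Real.log ((ρ00 + g * (1 - ρ00) - t) / 2) + 1) * (-(1 / (2 * t) * -(4 * g)) / 2)) q := by
    unfold Nfun
    exact ((hA.add hB).sub hC).sub hD
  rw [hN.deriv]
  have hkey := key_ineq hl2pos (by linarith : (1 - s) / 2 < (1 + s) / 2) hg0 hc hd
    (by linarith : (ρ00 + g * (1 - ρ00) - t) / 2 < (ρ00 + g * (1 - ρ00) + t) / 2)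
  rw [show (1 + s) / 2 - (1 - s) / 2 = s by ring,
      show (ρ00 + g * (1 - ρ00) + t) / 2 - (ρ00 + g * (1 - ρ00) - t) / 2 = t by ring] at hkey
  have hDeq : (Real.log ((1 + s) / 2) + 1) * (1 / (2 * s) * (-4) / 2)
       + (Real.log ((1 - s) / 2) + 1) * (-(1 / (2 * s) * (-4)) / 2)
       - (Real.log ((ρ00 + g * (1 - ρ00) + t) / 2) + 1) * (1 / (2 * t) * -(4 * g) / 2)
       - (Real.log ((ρ00 + g * (1 - ρ00) - t) / 2) + 1) * (-(1 / (2 * t) * -(4 * g)) / 2)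
      = -((Real.log ((1 + s) / 2) - Real.log ((1 - s) / 2)) / s)
        + g * (Real.log ((ρ00 + g * (1 - ρ00) + t) / 2)
            - Real.log ((ρ00 + g * (1 - ρ00) - t) / 2)) / t := by
    field_simp
    ring
  rw [hDeq]
  linarith [hkey]


/-- for fixed diagonal entries `ρ00, ρ11 ≥ 0` with `ρ00 + ρ11 = 1`,
`0 < ρ11 < 1`, and fixed damping parameter `g ∈ (0,1)`, the map `c ↦ R(c)` is
strictly increasing on `[0, √(ρ00 ρ11)]`. -/
theorem randSP_strictMonoOn (ρ00 ρ11 g : ℝ)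
    (h00 : 0 ≤ ρ00) (h11 : 0 ≤ ρ11) (hsum : ρ00 + ρ11 = 1)
    (h11pos : 0 < ρ11) (h11lt : ρ11 < 1) (hg0 : 0 < g) (hg1 : g < 1) :
    StrictMonoOn (fun c => RandSP ρ00 ρ11 g c)
      (Set.Icc 0 (Real.sqrt (ρ00 * ρ11))) := by
  have hρ0 : 0 < ρ00 := by linarith
  have hp : 0 < ρ00 * ρ11 := mul_pos hρ0 h11pos
  have hanti := Nfun_strictAntiOn ρ00 ρ11 g hsum h11pos h11lt hg0 hg1
  have hrw : ∀ c : ℝ, RandSP ρ00 ρ11 g c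
      = Nfun ρ00 ρ11 g (ρ00 * ρ11 - c ^ 2) / Real.log 2
        - ρ11 * (1 - g) * Real.logb 2 (ρ11 * (1 - g)) := by
    intro c
    have h1 : (ρ11 - ρ00) ^ 2 + 4 * c ^ 2 = 1 - 4 * (ρ00 * ρ11 - c ^ 2) := by
      linear_combination (ρ00 + ρ11 + 1) * hsum
    have h2 : (ρ00 - g * ρ11) ^ 2 + 4 * g * c ^ 2
        = (ρ00 + g * ρ11) ^ 2 - 4 * g * (ρ00 * ρ11 - c ^ 2) := by ring
    simp only [RandSP, Nfun, Real.logb, h1, h2]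
    ring
  intro c1 hc1 c2 hc2 hlt
  simp only [Set.mem_Icc] at hc1 hc2
  have hc1sq : c1 ^ 2 ≤ ρ00 * ρ11 := by
    nlinarith [mul_le_mul hc1.2 hc1.2 hc1.1 (Real.sqrt_nonneg (ρ00 * ρ11)),
      Real.sq_sqrt hp.le]
  have hc2sq : c2 ^ 2 ≤ ρ00 * ρ11 := by
    nlinarith [mul_le_mul hc2.2 hc2.2 hc2.1 (Real.sqrt_nonneg (ρ00 * ρ11)),
      Real.sq_sqrt hp.le]
  have hq1 : ρ00 * ρ11 - c1 ^ 2 ∈ Set.Icc 0 (ρ00 * ρ11) :=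
    ⟨by linarith, by nlinarith [sq_nonneg c1]⟩
  have hq2 : ρ00 * ρ11 - c2 ^ 2 ∈ Set.Icc 0 (ρ00 * ρ11) :=
    ⟨by linarith, by nlinarith [sq_nonneg c2]⟩
  have hqlt : ρ00 * ρ11 - c2 ^ 2 < ρ00 * ρ11 - c1 ^ 2 := by nlinarith [hc1.1]
  have hmain := hanti hq2 hq1 hqlt
  have hlog2 : 0 < Real.log 2 := Real.log_pos one_lt_two
  simp only
  rw [hrw c1, hrw c2]
  have := (div_lt_div_iff_of_pos_right hlog2).2 hmain
  linarith
end

section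
/- For all ρ00, ρ11 ≥ 0 with ρ00 + ρ11 = 1, all g ∈ (0,1), and all c with 0 ≤ c ≤ √(ρ00·ρ11), the single-photon randomness satisfies the lower bound R(c) ≥ ρ11·(−(1−g)·log₂(1−g) − g·log₂ g). -/
open Real Set

lemma convexOn_sinh' : ConvexOn ℝ (Ici (0:ℝ)) Real.sinh := by
  apply convexOn_of_deriv2_nonneg (convex_Ici 0) Real.continuous_sinh.continuousOn
    (Real.differentiable_sinh.differentiableOn)
  · simp only [Real.deriv_sinh]
    exact Real.differentiable_cosh.differentiableOn
  · intro x hx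
    rw [interior_Ici, mem_Ioi] at hx
    simp only [Function.iterate_succ, Function.iterate_zero, Function.comp_apply, id_eq,
      Real.deriv_sinh, Real.deriv_cosh]
    exact (Real.sinh_pos_iff.2 hx).le

lemma sinh_slope {u v : ℝ} (hu : 0 ≤ u) (huv : u ≤ v) : v * Real.sinh u ≤ u * Real.sinh v := by
  rcases eq_or_lt_of_le (hu.trans huv) with hv | hv
  · have : v = 0 := hv.symm
    have : u = 0 := le_antisymm (huv.trans_eq this) hu
    simp [this, ‹v = 0›]
  · have h1 : u / v ∈ Icc (0:ℝ) 1 := ⟨div_nonneg hu hv.le, div_le_one_of_le₀ huv hv.le⟩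
    have := convexOn_sinh'.2 (mem_Ici.2 (le_refl 0)) (mem_Ici.2 hv.le)
      (by linarith [h1.2] : (0:ℝ) ≤ 1 - u/v) h1.1 (by ring)
    simp only [smul_eq_mul, mul_zero, zero_add, Real.sinh_zero, mul_zero, zero_add] at this
    have h2 : Real.sinh u ≤ u / v * Real.sinh v := by
      rwa [div_mul_cancel₀ _ hv.ne'] at this
    calc v * Real.sinh u ≤ v * (u / v * Real.sinh v) := by
          exact mul_le_mul_of_nonneg_left h2 hv.le
      _ = u * Real.sinh v := by field_simp


lemma key_lemma {s x y : ℝ} (hs0 : 0 ≤ s) (hs1 : s ≤ 1) (hx : 0 ≤ x) (hy : 0 ≤ y)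
    (h : s * Real.cosh x ≤ Real.cosh y) : s * (y * Real.sinh x) ≤ x * Real.sinh y := by
  rcases le_total x y with hxy | hyx
  · calc s * (y * Real.sinh x) ≤ 1 * (y * Real.sinh x) := by
          apply mul_le_mul_of_nonneg_right hs1
          exact mul_nonneg hy (Real.sinh_nonneg_iff.2 hx)
      _ = y * Real.sinh x := one_mul _
      _ ≤ x * Real.sinh y := sinh_slope hx hxy
  · -- y ≤ x
    have hcx : (0:ℝ) < Real.cosh x := Real.cosh_pos x
    have h2 : s ≤ Real.cosh y / Real.cosh x := (le_div_iff₀ hcx).2 h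
    have h3 : (x + y) * Real.sinh (x - y) ≤ (x - y) * Real.sinh (x + y) :=
      sinh_slope (by linarith) (by linarith)
    have hid : (x - y) * Real.sinh (x + y) - (x + y) * Real.sinh (x - y)
        = 2 * (x * Real.sinh y * Real.cosh x - y * Real.sinh x * Real.cosh y) := by
      rw [Real.sinh_add, Real.sinh_sub]; ring
    have h4 : y * Real.sinh x * Real.cosh y ≤ x * Real.sinh y * Real.cosh x := by nlinarith
    calc s * (y * Real.sinh x) ≤ (Real.cosh y / Real.cosh x) * (y * Real.sinh x) := by
          apply mul_le_mul_of_nonneg_right h2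
          exact mul_nonneg hy (Real.sinh_nonneg_iff.2 hx)
      _ ≤ x * Real.sinh y := by
          rw [div_mul_eq_mul_div, div_le_iff₀ hcx]; nlinarith
  
lemma cosh_half_log {z : ℝ} (h0 : 0 ≤ z) (h1 : z < 1) :
    Real.cosh ((Real.log (1+z) - Real.log (1-z))/2) = 1 / Real.sqrt (1 - z^2) ∧
    Real.sinh ((Real.log (1+z) - Real.log (1-z))/2) = z / Real.sqrt (1 - z^2) := by
  have hp : (0:ℝ) < 1 + z := by linarith
  have hm : (0:ℝ) < 1 - z := by linarith
  set w : ℝ := Real.sqrt ((1+z)/(1-z)) with hw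
  have hwpos : 0 < w := Real.sqrt_pos.2 (div_pos hp hm)
  have hlogw : Real.log w = (Real.log (1+z) - Real.log (1-z))/2 := by
    rw [hw, Real.log_sqrt (div_pos hp hm).le, Real.log_div hp.ne' hm.ne']
  have hexp : Real.exp ((Real.log (1+z) - Real.log (1-z))/2) = w := by
    rw [← hlogw, Real.exp_log hwpos]
  have hexpneg : Real.exp (-((Real.log (1+z) - Real.log (1-z))/2)) = w⁻¹ := by
    rw [Real.exp_neg, hexp]
  have hsq : Real.sqrt (1 - z^2) = Real.sqrt (1-z) * Real.sqrt (1+z) := by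
    rw [← Real.sqrt_mul hm.le]; ring_nf
  have hw2 : w = Real.sqrt (1+z) / Real.sqrt (1-z) := by
    rw [hw, Real.sqrt_div hp.le]
  have hwinv : w⁻¹ = Real.sqrt (1-z) / Real.sqrt (1+z) := by
    rw [hw2, inv_div]
  have hsp : (0:ℝ) < Real.sqrt (1+z) := Real.sqrt_pos.2 hp
  have hsm : (0:ℝ) < Real.sqrt (1-z) := Real.sqrt_pos.2 hm
  have hpp : Real.sqrt (1+z) * Real.sqrt (1+z) = 1 + z := Real.mul_self_sqrt hp.le
  have hmm : Real.sqrt (1-z) * Real.sqrt (1-z) = 1 - z := Real.mul_self_sqrt hm.le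
  constructor
  · rw [Real.cosh_eq, hexp, hexpneg, hw2, inv_div, hsq]
    rw [div_add_div _ _ hsm.ne' hsp.ne']
    field_simp
    nlinarith [hpp, hmm]
  · rw [Real.sinh_eq, hexp, hexpneg, hw2, inv_div, hsq]
    rw [div_sub_div _ _ hsm.ne' hsp.ne']
    field_simp
    nlinarith [hpp, hmm]


lemma MI {g F δ Δ' : ℝ} (hg : 0 < g) (hgF : g ≤ F) (hF1 : F ≤ 1) (hδ0 : 0 ≤ δ) (hδ1 : δ < 1)
    (hΔ : 0 < Δ') (hrel : F^2 - Δ'^2 = g*(1 - δ^2)) :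
    g * δ * (Real.log (F+Δ') - Real.log (F-Δ')) ≤ Δ' * (Real.log (1+δ) - Real.log (1-δ)) := by
  have hF0 : (0:ℝ) < F := hg.trans_le hgF
  have hg1 : g ≤ 1 := hgF.trans hF1
  have h1δ : (0:ℝ) < 1 - δ^2 := by nlinarith [mul_pos (show (0:ℝ) < 1-δ by linarith) (show (0:ℝ) < 1+δ by linarith)]
  have hΔF : Δ' < F := by
    apply lt_of_pow_lt_pow_left₀ 2 hF0.le
    nlinarith [mul_pos hg h1δ]
  set r : ℝ := Δ'/F with hr
  clear_value r
  have hr0 : 0 < r := hr ▸ div_pos hΔ hF0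
  have hr1 : r < 1 := hr ▸ (div_lt_one hF0).2 hΔF
  have hrF : r * F = Δ' := by rw [hr]; field_simp
  set x : ℝ := (Real.log (1+δ) - Real.log (1-δ))/2 with hxdef
  set y : ℝ := (Real.log (1+r) - Real.log (1-r))/2 with hydef
  clear_value x y
  have hx0 : 0 ≤ x := by
    have := Real.log_le_log (by linarith : (0:ℝ) < 1-δ) (by linarith : (1:ℝ)-δ ≤ 1+δ)
    rw [hxdef]; linarith
  have hy0 : 0 ≤ y := by
    have := Real.log_le_log (by linarith : (0:ℝ) < 1-r) (by linarith : (1:ℝ)-r ≤ 1+r)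
    rw [hydef]; linarith
  obtain ⟨hcx, hsx⟩ := cosh_half_log hδ0 hδ1
  obtain ⟨hcy, hsy⟩ := cosh_half_log hr0.le hr1
  rw [← hxdef] at hcx hsx
  rw [← hydef] at hcy hsy
  set c1 : ℝ := Real.sqrt (1 - δ^2) with hc1
  set c2 : ℝ := Real.sqrt (1 - r^2) with hc2
  set sg : ℝ := Real.sqrt g with hsg
  clear_value c1 c2 sg
  have hc1p : 0 < c1 := hc1 ▸ Real.sqrt_pos.2 h1δ
  have hc2p : 0 < c2 := hc2 ▸ Real.sqrt_pos.2 (by nlinarith [mul_pos (show (0:ℝ) < 1-r by linarith) (show (0:ℝ) < 1+r by linarith)])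
  have hsgp : 0 < sg := hsg ▸ Real.sqrt_pos.2 hg
  have hsg1 : sg ≤ 1 := by
    rw [hsg, show (1:ℝ) = Real.sqrt 1 from (Real.sqrt_one).symm]
    exact Real.sqrt_le_sqrt hg1
  have hsgsq : sg * sg = g := by rw [hsg]; exact Real.mul_self_sqrt hg.le
  have hFc2eq : sg * c1 = F * c2 := by
    rw [hsg, hc1, hc2, ← Real.sqrt_mul hg.le, ← Real.sqrt_sq hF0.le, ← Real.sqrt_mul (sq_nonneg F)]
    congr 1
    have : F^2 * (1 - r^2) = F^2 - Δ'^2 := by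
      rw [hr]; field_simp
    rw [this, hrel]
  -- hypothesis of key lemma : sg * cosh x ≤ cosh y, i.e. sg / c1 ≤ 1 / c2
  have hkeyhyp : sg * Real.cosh x ≤ Real.cosh y := by
    rw [hcx, hcy, mul_one_div, div_le_div_iff₀ hc1p hc2p, one_mul]
    calc sg * c2 = sg * (sg * c1) / F := by rw [hFc2eq]; field_simp
      _ = (g/F) * c1 := by rw [← mul_assoc, hsgsq]; ring
      _ ≤ 1 * c1 := by
          apply mul_le_mul_of_nonneg_right _ hc1p.le
          rw [div_le_one hF0]; exact hgF
      _ = c1 := one_mul _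
  have hkey := key_lemma hsgp.le hsg1 hx0 hy0 hkeyhyp
  rw [hsx, hsy] at hkey
  have h7 : sg * y * δ * c2 ≤ x * r * c1 := by
    rw [show sg * (y * (δ/c1)) = (sg*y*δ)/c1 from by ring,
        show x * (r/c2) = (x*r)/c2 from by ring, div_le_div_iff₀ hc1p hc2p] at hkey
    linarith
  have h8 := mul_le_mul_of_nonneg_left h7 hsgp.le
  have h9 : g*y*δ*c2 ≤ Δ'*x*c2 := by
    calc g*y*δ*c2 = sg*(sg*y*δ*c2) := by rw [← hsgsq]; ring
      _ ≤ sg*(x*r*c1) := h8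
      _ = x*r*(sg*c1) := by ring
      _ = x*r*(F*c2) := by rw [hFc2eq]
      _ = Δ'*x*c2 := by rw [← hrF]; ring
  have h10 : g*y*δ ≤ Δ'*x := le_of_mul_le_mul_right (by linarith) hc2p
  have hlog1 : Real.log (F+Δ') = Real.log F + Real.log (1+r) := by
    rw [show F + Δ' = F * (1+r) from by rw [← hrF]; ring]
    exact Real.log_mul hF0.ne' (ne_of_gt (by linarith : (0:ℝ) < 1+r))
  have hlog2 : Real.log (F-Δ') = Real.log F + Real.log (1-r) := by
    rw [show F - Δ' = F * (1-r) from by rw [← hrF]; ring]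
    exact Real.log_mul hF0.ne' (ne_of_gt (by linarith : (0:ℝ) < 1-r))
  rw [hlog1, hlog2]
  have e1 : Real.log (1+r) - Real.log (1-r) = 2*y := by rw [hydef]; ring
  have e2 : Real.log (1+δ) - Real.log (1-δ) = 2*x := by rw [hxdef]; ring
  calc g * δ * (Real.log F + Real.log (1+r) - (Real.log F + Real.log (1-r)))
      = g * δ * (2*y) := by rw [show Real.log F + Real.log (1+r) - (Real.log F + Real.log (1-r)) = Real.log (1+r) - Real.log (1-r) from by ring, e1]
    _ ≤ Δ' * (2*x) := by linarith
    _ = Δ' * (Real.log (1+δ) - Real.log (1-δ)) := by rw [e2]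


lemma Gmono {a b g : ℝ} (ha : 0 ≤ a) (hb : 0 ≤ b) (hab : a + b = 1)
    (hg0 : 0 < g) (hg1 : g < 1) :
    MonotoneOn (fun δ : ℝ =>
      ((1+δ)/2) * Real.log ((1+δ)/2) + ((1-δ)/2) * Real.log ((1-δ)/2)
      - ((a + g*b + Real.sqrt (g*δ^2 + ((a-g*b)^2 - g*(b-a)^2)))/2)
          * Real.log ((a + g*b + Real.sqrt (g*δ^2 + ((a-g*b)^2 - g*(b-a)^2)))/2)
      - ((a + g*b - Real.sqrt (g*δ^2 + ((a-g*b)^2 - g*(b-a)^2)))/2)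
          * Real.log ((a + g*b - Real.sqrt (g*δ^2 + ((a-g*b)^2 - g*(b-a)^2)))/2))
      (Icc (Real.sqrt ((b-a)^2)) 1) := by
  set F : ℝ := a + g*b with hF
  set P : ℝ := (a-g*b)^2 - g*(b-a)^2 with hP
  have hF0 : 0 < F := by rw [hF]; nlinarith
  have hgF : g ≤ F := by rw [hF]; nlinarith
  have hF1 : F ≤ 1 := by rw [hF]; nlinarith
  -- the derivative facts, for δ in the open interval
  have hderiv : ∀ δ ∈ Ioo (Real.sqrt ((b-a)^2)) 1,
      HasDerivAt (fun δ : ℝ =>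
        ((1+δ)/2) * Real.log ((1+δ)/2) + ((1-δ)/2) * Real.log ((1-δ)/2)
        - ((F + Real.sqrt (g*δ^2 + P))/2) * Real.log ((F + Real.sqrt (g*δ^2 + P))/2)
        - ((F - Real.sqrt (g*δ^2 + P))/2) * Real.log ((F - Real.sqrt (g*δ^2 + P))/2))
      ((Real.log ((1+δ)/2) + 1) * (1/2) + (Real.log ((1-δ)/2) + 1) * (-1/2)
        - (Real.log ((F + Real.sqrt (g*δ^2 + P))/2) + 1) * ((g*(2*δ) / (2 * Real.sqrt (g*δ^2 + P)))/2)
        - (Real.log ((F - Real.sqrt (g*δ^2 + P))/2) + 1) * (-(g*(2*δ) / (2 * Real.sqrt (g*δ^2 + P)))/2)) δ := by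
    intro δ hδ
    obtain ⟨hδl, hδr⟩ := hδ
    have hδ0 : 0 ≤ δ := (Real.sqrt_nonneg _).trans hδl.le
    have hD : (b-a)^2 < δ^2 := by
      calc (b-a)^2 = (Real.sqrt ((b-a)^2))^2 := (Real.sq_sqrt (sq_nonneg _)).symm
        _ < δ^2 := pow_lt_pow_left₀ hδl (Real.sqrt_nonneg _) (by norm_num)
    have hinner : 0 < g*δ^2 + P := by rw [hP]; nlinarith
    set Δ' : ℝ := Real.sqrt (g*δ^2 + P) with hΔ'
    have hΔ'pos : 0 < Δ' := Real.sqrt_pos.2 hinner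
    have hΔ'sq : Δ'^2 = g*δ^2 + P := Real.sq_sqrt hinner.le
    have hrel : F^2 - Δ'^2 = g*(1 - δ^2) := by
      rw [hΔ'sq, hF, hP]; linear_combination (g*(a+b+1))*hab
    have hΔ'F : Δ' < F := by
      apply lt_of_pow_lt_pow_left₀ 2 hF0.le
      nlinarith [mul_pos hg0 (show (0:ℝ) < 1 - δ^2 by nlinarith)]
    have hμ1 : (0:ℝ) < (F + Δ')/2 := by linarith
    have hμ2 : (0:ℝ) < (F - Δ')/2 := by linarith
    have hlam1 : (0:ℝ) < (1+δ)/2 := by linarith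
    have hlam2 : (0:ℝ) < (1-δ)/2 := by linarith
    -- inner polynomial
    have h1 : HasDerivAt (fun δ : ℝ => g*δ^2 + P) (g*(2*δ)) δ := by
      have := ((hasDerivAt_pow 2 δ).const_mul g).add_const P
      exact this.congr_deriv (by norm_num)
    have h2 : HasDerivAt (fun δ : ℝ => Real.sqrt (g*δ^2 + P)) (g*(2*δ) / (2*Δ')) δ :=
      h1.sqrt hinner.ne'
    have h3 : HasDerivAt (fun δ : ℝ => (F + Real.sqrt (g*δ^2 + P))/2)
        ((g*(2*δ) / (2*Δ'))/2) δ := (h2.const_add F).div_const 2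
    have h4 : HasDerivAt (fun δ : ℝ => (F - Real.sqrt (g*δ^2 + P))/2)
        ((-(g*(2*δ) / (2*Δ')))/2) δ := (h2.const_sub F).div_const 2
    have h5 : HasDerivAt (fun δ : ℝ => (1+δ)/2) (1/2 : ℝ) δ := by
      simpa using ((hasDerivAt_id δ).const_add 1).div_const 2
    have h6 : HasDerivAt (fun δ : ℝ => (1-δ)/2) (-1/2 : ℝ) δ := by
      have h := ((hasDerivAt_id δ).const_sub 1).div_const 2
      exact h.congr_deriv (by norm_num)
    have hf1 := (Real.hasDerivAt_mul_log hlam1.ne').comp δ h5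
    have hf2 := (Real.hasDerivAt_mul_log hlam2.ne').comp δ h6
    have hf3 := (Real.hasDerivAt_mul_log hμ1.ne').comp δ h3
    have hf4 := (Real.hasDerivAt_mul_log hμ2.ne').comp δ h4
    simp only [Function.comp_def] at hf1 hf2 hf3 hf4
    exact ((hf1.add hf2).sub hf3).sub hf4
  apply monotoneOn_of_deriv_nonneg (convex_Icc _ _)
  · -- continuity
    apply Continuous.continuousOn
    have hc : Continuous fun δ : ℝ => Real.sqrt (g*δ^2 + P) := by
      exact Real.continuous_sqrt.comp ((continuous_const.mul (continuous_pow 2)).add continuous_const)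
    have hml := Real.continuous_mul_log
    have c1 : Continuous fun δ : ℝ => (1+δ)/2 := (continuous_const.add continuous_id).div_const 2
    have c2 : Continuous fun δ : ℝ => (1-δ)/2 := (continuous_const.sub continuous_id).div_const 2
    have c3 : Continuous fun δ : ℝ => (F + Real.sqrt (g*δ^2 + P))/2 :=
      (continuous_const.add hc).div_const 2
    have c4 : Continuous fun δ : ℝ => (F - Real.sqrt (g*δ^2 + P))/2 :=
      (continuous_const.sub hc).div_const 2
    exact (((hml.comp c1).add (hml.comp c2)).sub (hml.comp c3)).sub (hml.comp c4)
  · rw [interior_Icc]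
    intro δ hδ
    exact (hderiv δ hδ).differentiableAt.differentiableWithinAt
  · rw [interior_Icc]
    intro δ hδ
    rw [(hderiv δ hδ).deriv]
    -- now show the derivative is nonnegative using MI
    obtain ⟨hδl, hδr⟩ := hδ
    have hδ0 : 0 ≤ δ := (Real.sqrt_nonneg _).trans hδl.le
    have hD : (b-a)^2 < δ^2 := by
      calc (b-a)^2 = (Real.sqrt ((b-a)^2))^2 := (Real.sq_sqrt (sq_nonneg _)).symm
        _ < δ^2 := pow_lt_pow_left₀ hδl (Real.sqrt_nonneg _) (by norm_num)
    have hinner : 0 < g*δ^2 + P := by rw [hP]; nlinarith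
    set Δ' : ℝ := Real.sqrt (g*δ^2 + P) with hΔ'
    have hΔ'pos : 0 < Δ' := Real.sqrt_pos.2 hinner
    have hΔ'sq : Δ'^2 = g*δ^2 + P := Real.sq_sqrt hinner.le
    have hrel : F^2 - Δ'^2 = g*(1 - δ^2) := by
      rw [hΔ'sq, hF, hP]; linear_combination (g*(a+b+1))*hab
    have hΔ'F : Δ' < F := by
      apply lt_of_pow_lt_pow_left₀ 2 hF0.le
      nlinarith [mul_pos hg0 (show (0:ℝ) < 1 - δ^2 by nlinarith)]
    have hmi := MI hg0 hgF hF1 hδ0 hδr hΔ'pos hrel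
    have hl1 : Real.log ((1+δ)/2) = Real.log (1+δ) - Real.log 2 :=
      Real.log_div (by linarith) two_ne_zero
    have hl2 : Real.log ((1-δ)/2) = Real.log (1-δ) - Real.log 2 :=
      Real.log_div (by linarith) two_ne_zero
    have hl3 : Real.log ((F+Δ')/2) = Real.log (F+Δ') - Real.log 2 :=
      Real.log_div (by linarith) two_ne_zero
    have hl4 : Real.log ((F-Δ')/2) = Real.log (F-Δ') - Real.log 2 :=
      Real.log_div (by linarith) two_ne_zero
    rw [hl1, hl2, hl3, hl4]
    have expand : (Real.log (1+δ) - Real.log 2 + 1) * (1/2) + (Real.log (1-δ) - Real.log 2 + 1) * (-1/2)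
        - (Real.log (F+Δ') - Real.log 2 + 1) * ((g*(2*δ) / (2 * Δ'))/2)
        - (Real.log (F-Δ') - Real.log 2 + 1) * (-(g*(2*δ) / (2 * Δ'))/2)
        = (1/2) * (Real.log (1+δ) - Real.log (1-δ))
          - (g*δ/(2*Δ')) * (Real.log (F+Δ') - Real.log (F-Δ')) := by
      field_simp
      ring
    rw [expand]
    rw [sub_nonneg, div_mul_eq_mul_div, div_le_iff₀ (by linarith : (0:ℝ) < 2*Δ')]
    calc g*δ*(Real.log (F+Δ') - Real.log (F-Δ'))
        ≤ Δ' * (Real.log (1+δ) - Real.log (1-δ)) := hmi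
      _ = 1/2 * (Real.log (1+δ) - Real.log (1-δ)) * (2*Δ') := by ring


lemma endpointG {a b g : ℝ} (hab : a + b = 1) :
    ((1+Real.sqrt ((b-a)^2))/2) * Real.log ((1+Real.sqrt ((b-a)^2))/2)
    + ((1-Real.sqrt ((b-a)^2))/2) * Real.log ((1-Real.sqrt ((b-a)^2))/2)
    - ((a + g*b + Real.sqrt (g*(Real.sqrt ((b-a)^2))^2 + ((a-g*b)^2 - g*(b-a)^2)))/2)
        * Real.log ((a + g*b + Real.sqrt (g*(Real.sqrt ((b-a)^2))^2 + ((a-g*b)^2 - g*(b-a)^2)))/2)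
    - ((a + g*b - Real.sqrt (g*(Real.sqrt ((b-a)^2))^2 + ((a-g*b)^2 - g*(b-a)^2)))/2)
        * Real.log ((a + g*b - Real.sqrt (g*(Real.sqrt ((b-a)^2))^2 + ((a-g*b)^2 - g*(b-a)^2)))/2)
    = b * Real.log b - (g*b) * Real.log (g*b) := by
  have h2 : g*(Real.sqrt ((b-a)^2))^2 + ((a-g*b)^2 - g*(b-a)^2) = (a-g*b)^2 := by
    rw [Real.sq_sqrt (sq_nonneg _)]; ring
  rw [h2, Real.sqrt_sq_eq_abs, Real.sqrt_sq_eq_abs]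
  rcases abs_cases (b-a) with ⟨e1, _⟩ | ⟨e1, _⟩ <;>
    rcases abs_cases (a-g*b) with ⟨e2, _⟩ | ⟨e2, _⟩ <;> rw [e1, e2]
  · rw [show (1+(b-a))/2 = b by linarith, show (1-(b-a))/2 = a by linarith,
      show (a+g*b+(a-g*b))/2 = a by ring, show (a+g*b-(a-g*b))/2 = g*b by ring]
    ring
  · rw [show (1+(b-a))/2 = b by linarith, show (1-(b-a))/2 = a by linarith,
      show (a+g*b+ -(a-g*b))/2 = g*b by ring, show (a+g*b- -(a-g*b))/2 = a by ring]
    ring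
  · rw [show (1+ -(b-a))/2 = a by linarith, show (1- -(b-a))/2 = b by linarith,
      show (a+g*b+(a-g*b))/2 = a by ring, show (a+g*b-(a-g*b))/2 = g*b by ring]
    ring
  · rw [show (1+ -(b-a))/2 = a by linarith, show (1- -(b-a))/2 = b by linarith,
      show (a+g*b+ -(a-g*b))/2 = g*b by ring, show (a+g*b- -(a-g*b))/2 = a by ring]
    ring

lemma idG {b g : ℝ} (hb : 0 ≤ b) (hg0 : 0 < g) (hg1 : g < 1) :
    b * Real.log b - (g*b)*Real.log (g*b) - b*(1-g)*Real.log (b*(1-g))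
    = b * (-(1-g)*Real.log (1-g) - g*Real.log g) := by
  rcases eq_or_lt_of_le hb with h0 | hbp
  · rw [← h0]; simp
  · rw [Real.log_mul hg0.ne' hbp.ne', Real.log_mul hbp.ne' (by linarith : (1:ℝ)-g ≠ 0)]
    ring

/-- lower bound Eq. (19) on the single-photon randomness:
`R(c) ≥ ρ11 ( −(1−g) log₂(1−g) − g log₂ g )`. -/
theorem randSP_lowerBound (ρ00 ρ11 g c : ℝ)
    (h00 : 0 ≤ ρ00) (h11 : 0 ≤ ρ11) (hsum : ρ00 + ρ11 = 1)
    (hg0 : 0 < g) (hg1 : g < 1)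
    (hc0 : 0 ≤ c) (hc : c ≤ Real.sqrt (ρ00 * ρ11)) :
    ρ11 * (-(1 - g) * Real.logb 2 (1 - g) - g * Real.logb 2 g)
      ≤ RandSP ρ00 ρ11 g c := by
  have hL2 : (0:ℝ) < Real.log 2 := Real.log_pos (by norm_num)
  have hc2 : c^2 ≤ ρ00*ρ11 := by
    have h := pow_le_pow_left₀ hc0 hc 2
    rwa [Real.sq_sqrt (mul_nonneg h00 h11)] at h
  have hδ0c : Real.sqrt ((ρ11-ρ00)^2) ≤ Real.sqrt ((ρ11-ρ00)^2 + 4*c^2) :=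
    Real.sqrt_le_sqrt (by nlinarith [sq_nonneg c])
  have hδc1 : Real.sqrt ((ρ11-ρ00)^2 + 4*c^2) ≤ 1 := by
    rw [show (1:ℝ) = Real.sqrt 1 by simp]
    exact Real.sqrt_le_sqrt (by nlinarith)
  have h01 : Real.sqrt ((ρ11-ρ00)^2) ≤ 1 := hδ0c.trans hδc1
  have hmono := Gmono h00 h11 hsum hg0 hg1
      (Set.mem_Icc.2 ⟨le_rfl, h01⟩) (Set.mem_Icc.2 ⟨hδ0c, hδc1⟩) hδ0c
  set δc : ℝ := Real.sqrt ((ρ11-ρ00)^2 + 4*c^2) with hδcdef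
  have eΔsqrt : Real.sqrt (g*δc^2 + ((ρ00-g*ρ11)^2 - g*(ρ11-ρ00)^2))
      = Real.sqrt ((ρ00-g*ρ11)^2 + 4*g*c^2) := by
    congr 1
    rw [hδcdef, Real.sq_sqrt (by positivity : (0:ℝ) ≤ (ρ11-ρ00)^2+4*c^2)]
    ring
  have hmain : ρ11 * Real.log ρ11 - (g*ρ11) * Real.log (g*ρ11) ≤
      ((1+δc)/2) * Real.log ((1+δc)/2) + ((1-δc)/2) * Real.log ((1-δc)/2)
      - ((ρ00 + g*ρ11 + Real.sqrt ((ρ00-g*ρ11)^2 + 4*g*c^2))/2)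
          * Real.log ((ρ00 + g*ρ11 + Real.sqrt ((ρ00-g*ρ11)^2 + 4*g*c^2))/2)
      - ((ρ00 + g*ρ11 - Real.sqrt ((ρ00-g*ρ11)^2 + 4*g*c^2))/2)
          * Real.log ((ρ00 + g*ρ11 - Real.sqrt ((ρ00-g*ρ11)^2 + 4*g*c^2))/2) := by
    calc ρ11 * Real.log ρ11 - (g*ρ11) * Real.log (g*ρ11)
        = ((1+Real.sqrt ((ρ11-ρ00)^2))/2) * Real.log ((1+Real.sqrt ((ρ11-ρ00)^2))/2)
          + ((1-Real.sqrt ((ρ11-ρ00)^2))/2) * Real.log ((1-Real.sqrt ((ρ11-ρ00)^2))/2)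
          - ((ρ00 + g*ρ11 + Real.sqrt (g*(Real.sqrt ((ρ11-ρ00)^2))^2 + ((ρ00-g*ρ11)^2 - g*(ρ11-ρ00)^2)))/2)
              * Real.log ((ρ00 + g*ρ11 + Real.sqrt (g*(Real.sqrt ((ρ11-ρ00)^2))^2 + ((ρ00-g*ρ11)^2 - g*(ρ11-ρ00)^2)))/2)
          - ((ρ00 + g*ρ11 - Real.sqrt (g*(Real.sqrt ((ρ11-ρ00)^2))^2 + ((ρ00-g*ρ11)^2 - g*(ρ11-ρ00)^2)))/2)
              * Real.log ((ρ00 + g*ρ11 - Real.sqrt (g*(Real.sqrt ((ρ11-ρ00)^2))^2 + ((ρ00-g*ρ11)^2 - g*(ρ11-ρ00)^2)))/2) :=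
          (endpointG hsum).symm
      _ ≤ ((1+δc)/2) * Real.log ((1+δc)/2) + ((1-δc)/2) * Real.log ((1-δc)/2)
          - ((ρ00 + g*ρ11 + Real.sqrt (g*δc^2 + ((ρ00-g*ρ11)^2 - g*(ρ11-ρ00)^2)))/2)
              * Real.log ((ρ00 + g*ρ11 + Real.sqrt (g*δc^2 + ((ρ00-g*ρ11)^2 - g*(ρ11-ρ00)^2)))/2)
          - ((ρ00 + g*ρ11 - Real.sqrt (g*δc^2 + ((ρ00-g*ρ11)^2 - g*(ρ11-ρ00)^2)))/2)
              * Real.log ((ρ00 + g*ρ11 - Real.sqrt (g*δc^2 + ((ρ00-g*ρ11)^2 - g*(ρ11-ρ00)^2)))/2) := hmono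
      _ = _ := by rw [eΔsqrt]
  have hid := idG h11 hg0 hg1
  have main2 : ρ11 * (-(1-g)*Real.log (1-g) - g*Real.log g)
      ≤ (((1+δc)/2) * Real.log ((1+δc)/2) + ((1-δc)/2) * Real.log ((1-δc)/2)
      - ((ρ00 + g*ρ11 + Real.sqrt ((ρ00-g*ρ11)^2 + 4*g*c^2))/2)
          * Real.log ((ρ00 + g*ρ11 + Real.sqrt ((ρ00-g*ρ11)^2 + 4*g*c^2))/2)
      - ((ρ00 + g*ρ11 - Real.sqrt ((ρ00-g*ρ11)^2 + 4*g*c^2))/2)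
          * Real.log ((ρ00 + g*ρ11 - Real.sqrt ((ρ00-g*ρ11)^2 + 4*g*c^2))/2))
      - ρ11*(1-g)*Real.log (ρ11*(1-g)) := by
    rw [← hid]
    have hbg : ρ11*(1-g) = ρ11*(1-g) := rfl
    linarith [hmain]
  -- now convert to the logb 2 statement
  show _ ≤ RandSP ρ00 ρ11 g c
  have hR : RandSP ρ00 ρ11 g c =
      ((((1+δc)/2) * Real.log ((1+δc)/2) + ((1-δc)/2) * Real.log ((1-δc)/2)
      - ((ρ00 + g*ρ11 + Real.sqrt ((ρ00-g*ρ11)^2 + 4*g*c^2))/2)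
          * Real.log ((ρ00 + g*ρ11 + Real.sqrt ((ρ00-g*ρ11)^2 + 4*g*c^2))/2)
      - ((ρ00 + g*ρ11 - Real.sqrt ((ρ00-g*ρ11)^2 + 4*g*c^2))/2)
          * Real.log ((ρ00 + g*ρ11 - Real.sqrt ((ρ00-g*ρ11)^2 + 4*g*c^2))/2))
      - ρ11*(1-g)*Real.log (ρ11*(1-g))) / Real.log 2 := by
    rw [RandSP]
    simp only [Real.logb, hδcdef]
    ring
  have hLHS : ρ11 * (-(1 - g) * Real.logb 2 (1 - g) - g * Real.logb 2 g)
      = (ρ11 * (-(1-g)*Real.log (1-g) - g*Real.log g)) / Real.log 2 := by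
    simp only [Real.logb]
    ring
  rw [hR, hLHS]
  exact (div_le_div_iff_of_pos_right hL2).2 main2
end

section
/- Fix ρ00, ρ11 > 0 with ρ00 + ρ11 = 1 and g ∈ (0,1). For every c with 0 < c < √(ρ00·ρ11), the single-photon randomness function R has derivative at c equal to (4c/ln 2)·( arctanh(Δ)/Δ − g·arctanh(Δ'/F)/Δ' ), where Δ = √((ρ11 − ρ00)² + 4c²), F = ρ00 + g·ρ11, and Δ' = √((ρ00 − g·ρ11)² + 4g·c²). -/
/-- Inverse hyperbolic tangent: `arctanh x = (1/2) ln((1+x)/(1−x))` for `|x| < 1`. -/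
noncomputable def arctanh (x : ℝ) : ℝ := (1 / 2) * Real.log ((1 + x) / (1 - x))

set_option maxHeartbeats 1600000 in
/-- for fixed `ρ00, ρ11 > 0` with `ρ00 + ρ11 = 1`, `g ∈ (0,1)`, and
`0 < c < √(ρ00 ρ11)`, the single-photon randomness has derivative at `c` equal to
`(4c/ln 2) ( arctanh(Δ)/Δ − g · arctanh(Δ'/F)/Δ' )`. -/
theorem randSP_hasDerivAt (ρ00 ρ11 g c : ℝ)
    (h00 : 0 < ρ00) (h11 : 0 < ρ11) (hsum : ρ00 + ρ11 = 1)
    (hg0 : 0 < g) (hg1 : g < 1)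
    (hc0 : 0 < c) (hc : c < Real.sqrt (ρ00 * ρ11)) :
    HasDerivAt (fun c => RandSP ρ00 ρ11 g c)
      ((4 * c / Real.log 2) *
        (arctanh (Real.sqrt ((ρ11 - ρ00) ^ 2 + 4 * c ^ 2)) /
            Real.sqrt ((ρ11 - ρ00) ^ 2 + 4 * c ^ 2)
          - g * arctanh (Real.sqrt ((ρ00 - g * ρ11) ^ 2 + 4 * g * c ^ 2) /
                  (ρ00 + g * ρ11)) /
              Real.sqrt ((ρ00 - g * ρ11) ^ 2 + 4 * g * c ^ 2))) c := by
  have hL2 : (0:ℝ) < Real.log 2 := Real.log_pos one_lt_two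
  have hc2 : c ^ 2 < ρ00 * ρ11 := (Real.lt_sqrt hc0.le).mp hc
  set Δ := Real.sqrt ((ρ11 - ρ00) ^ 2 + 4 * c ^ 2) with hΔdef
  set Δ' := Real.sqrt ((ρ00 - g * ρ11) ^ 2 + 4 * g * c ^ 2) with hΔ'def
  set F := ρ00 + g * ρ11 with hFdef
  have hApos : (0:ℝ) < (ρ11 - ρ00) ^ 2 + 4 * c ^ 2 := by positivity
  have hBpos : (0:ℝ) < (ρ00 - g * ρ11) ^ 2 + 4 * g * c ^ 2 := by positivity
  have hΔpos : 0 < Δ := Real.sqrt_pos.mpr hApos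
  have hΔlt : Δ < 1 := by
    rw [hΔdef]
    have : (ρ11 - ρ00) ^ 2 + 4 * c ^ 2 < 1 ^ 2 := by nlinarith
    exact (Real.sqrt_lt' one_pos).mpr this
  have hFpos : 0 < F := by positivity
  have hΔ'pos : 0 < Δ' := Real.sqrt_pos.mpr hBpos
  have hΔ'lt : Δ' < F := by
    rw [hΔ'def]
    have : (ρ00 - g * ρ11) ^ 2 + 4 * g * c ^ 2 < F ^ 2 := by
      rw [hFdef]; nlinarith
    exact (Real.sqrt_lt' hFpos).mpr this
  -- positivity of the four arguments
  have hp1 : (0:ℝ) < (1 + Δ) / 2 := by linarith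
  have hp2 : (0:ℝ) < (1 - Δ) / 2 := by linarith
  have hp3 : (0:ℝ) < (F + Δ') / 2 := by linarith
  have hp4 : (0:ℝ) < (F - Δ') / 2 := by linarith
  -- derivatives of the sqrt parts
  have hu : HasDerivAt (fun x : ℝ => (ρ11 - ρ00) ^ 2 + 4 * x ^ 2) (8 * c) c := by
    have := ((hasDerivAt_pow 2 c).const_mul 4).const_add ((ρ11 - ρ00) ^ 2)
    convert this using 1
    rfl; rfl
    simp; ring
  have hD : HasDerivAt (fun x : ℝ => Real.sqrt ((ρ11 - ρ00) ^ 2 + 4 * x ^ 2))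
      (4 * c / Δ) c := by
    have := hu.sqrt (ne_of_gt hApos)
    convert this using 1
    rw [← hΔdef]; field_simp; ring
  have hv : HasDerivAt (fun x : ℝ => (ρ00 - g * ρ11) ^ 2 + 4 * g * x ^ 2) (8 * g * c) c := by
    have := ((hasDerivAt_pow 2 c).const_mul (4 * g)).const_add ((ρ00 - g * ρ11) ^ 2)
    convert this using 1
    rfl; rfl
    simp; ring
  have hD' : HasDerivAt (fun x : ℝ => Real.sqrt ((ρ00 - g * ρ11) ^ 2 + 4 * g * x ^ 2))
      (4 * g * c / Δ') c := by
    have := hv.sqrt (ne_of_gt hBpos)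
    convert this using 1
    rw [← hΔ'def]; field_simp; ring
  -- the four entropy-like pieces
  have h1 : HasDerivAt (fun x : ℝ =>
      ((1 + Real.sqrt ((ρ11 - ρ00) ^ 2 + 4 * x ^ 2)) / 2) *
        Real.log ((1 + Real.sqrt ((ρ11 - ρ00) ^ 2 + 4 * x ^ 2)) / 2))
      ((Real.log ((1 + Δ) / 2) + 1) * (2 * c / Δ)) c := by
    have hg1' : HasDerivAt (fun x : ℝ =>
        (1 + Real.sqrt ((ρ11 - ρ00) ^ 2 + 4 * x ^ 2)) / 2) (2 * c / Δ) c := by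
      have := (hD.const_add 1).div_const 2
      convert this using 1; rfl; rfl; field_simp; ring
    have := (Real.hasDerivAt_mul_log (ne_of_gt hp1)).comp c hg1'
    simpa [Function.comp_def, ← hΔdef] using this
  have h2 : HasDerivAt (fun x : ℝ =>
      ((1 - Real.sqrt ((ρ11 - ρ00) ^ 2 + 4 * x ^ 2)) / 2) *
        Real.log ((1 - Real.sqrt ((ρ11 - ρ00) ^ 2 + 4 * x ^ 2)) / 2))
      ((Real.log ((1 - Δ) / 2) + 1) * (-(2 * c / Δ))) c := by
    have hg2' : HasDerivAt (fun x : ℝ =>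
        (1 - Real.sqrt ((ρ11 - ρ00) ^ 2 + 4 * x ^ 2)) / 2) (-(2 * c / Δ)) c := by
      have := (hD.const_sub 1).div_const 2
      convert this using 1; rfl; rfl; field_simp; ring
    have := (Real.hasDerivAt_mul_log (ne_of_gt hp2)).comp c hg2'
    simpa [Function.comp_def, ← hΔdef] using this
  have h3 : HasDerivAt (fun x : ℝ =>
      ((F + Real.sqrt ((ρ00 - g * ρ11) ^ 2 + 4 * g * x ^ 2)) / 2) *
        Real.log ((F + Real.sqrt ((ρ00 - g * ρ11) ^ 2 + 4 * g * x ^ 2)) / 2))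
      ((Real.log ((F + Δ') / 2) + 1) * (2 * g * c / Δ')) c := by
    have hg3' : HasDerivAt (fun x : ℝ =>
        (F + Real.sqrt ((ρ00 - g * ρ11) ^ 2 + 4 * g * x ^ 2)) / 2) (2 * g * c / Δ') c := by
      have := (hD'.const_add F).div_const 2
      convert this using 1; rfl; rfl; field_simp; ring
    have := (Real.hasDerivAt_mul_log (ne_of_gt hp3)).comp c hg3'
    simpa [Function.comp_def, ← hΔ'def] using this
  have h4 : HasDerivAt (fun x : ℝ =>
      ((F - Real.sqrt ((ρ00 - g * ρ11) ^ 2 + 4 * g * x ^ 2)) / 2) *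
        Real.log ((F - Real.sqrt ((ρ00 - g * ρ11) ^ 2 + 4 * g * x ^ 2)) / 2))
      ((Real.log ((F - Δ') / 2) + 1) * (-(2 * g * c / Δ'))) c := by
    have hg4' : HasDerivAt (fun x : ℝ =>
        (F - Real.sqrt ((ρ00 - g * ρ11) ^ 2 + 4 * g * x ^ 2)) / 2) (-(2 * g * c / Δ')) c := by
      have := (hD'.const_sub F).div_const 2
      convert this using 1; rfl; rfl; field_simp; ring
    have := (Real.hasDerivAt_mul_log (ne_of_gt hp4)).comp c hg4'
    simpa [Function.comp_def, ← hΔ'def] using this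
  -- assemble
  have hsum' : HasDerivAt (fun x : ℝ =>
      (((1 + Real.sqrt ((ρ11 - ρ00) ^ 2 + 4 * x ^ 2)) / 2) *
          Real.log ((1 + Real.sqrt ((ρ11 - ρ00) ^ 2 + 4 * x ^ 2)) / 2)
        + ((1 - Real.sqrt ((ρ11 - ρ00) ^ 2 + 4 * x ^ 2)) / 2) *
          Real.log ((1 - Real.sqrt ((ρ11 - ρ00) ^ 2 + 4 * x ^ 2)) / 2)
        - ρ11 * (1 - g) * Real.log (ρ11 * (1 - g))
        - ((F + Real.sqrt ((ρ00 - g * ρ11) ^ 2 + 4 * g * x ^ 2)) / 2) *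
          Real.log ((F + Real.sqrt ((ρ00 - g * ρ11) ^ 2 + 4 * g * x ^ 2)) / 2)
        - ((F - Real.sqrt ((ρ00 - g * ρ11) ^ 2 + 4 * g * x ^ 2)) / 2) *
          Real.log ((F - Real.sqrt ((ρ00 - g * ρ11) ^ 2 + 4 * g * x ^ 2)) / 2))
        / Real.log 2)
      (((Real.log ((1 + Δ) / 2) + 1) * (2 * c / Δ)
        + (Real.log ((1 - Δ) / 2) + 1) * (-(2 * c / Δ))
        - (Real.log ((F + Δ') / 2) + 1) * (2 * g * c / Δ')
        - (Real.log ((F - Δ') / 2) + 1) * (-(2 * g * c / Δ'))) / Real.log 2) c := by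
    exact ((((h1.add h2).sub_const (ρ11 * (1 - g) * Real.log (ρ11 * (1 - g)))).sub
      h3).sub h4).div_const (Real.log 2)
  -- identify the function with RandSP
  have hfun : (fun c => RandSP ρ00 ρ11 g c) = (fun x : ℝ =>
      (((1 + Real.sqrt ((ρ11 - ρ00) ^ 2 + 4 * x ^ 2)) / 2) *
          Real.log ((1 + Real.sqrt ((ρ11 - ρ00) ^ 2 + 4 * x ^ 2)) / 2)
        + ((1 - Real.sqrt ((ρ11 - ρ00) ^ 2 + 4 * x ^ 2)) / 2) *
          Real.log ((1 - Real.sqrt ((ρ11 - ρ00) ^ 2 + 4 * x ^ 2)) / 2)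
        - ρ11 * (1 - g) * Real.log (ρ11 * (1 - g))
        - ((F + Real.sqrt ((ρ00 - g * ρ11) ^ 2 + 4 * g * x ^ 2)) / 2) *
          Real.log ((F + Real.sqrt ((ρ00 - g * ρ11) ^ 2 + 4 * g * x ^ 2)) / 2)
        - ((F - Real.sqrt ((ρ00 - g * ρ11) ^ 2 + 4 * g * x ^ 2)) / 2) *
          Real.log ((F - Real.sqrt ((ρ00 - g * ρ11) ^ 2 + 4 * g * x ^ 2)) / 2))
        / Real.log 2) := by
    funext x
    simp only [RandSP, Real.logb, hFdef]
    field_simp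
    ring
  rw [hfun]
  -- identify the derivative value
  convert hsum' using 1
  have e1 : Real.log ((1 + Δ) / 2) = Real.log (1 + Δ) - Real.log 2 :=
    Real.log_div (by linarith) two_ne_zero
  have e2 : Real.log ((1 - Δ) / 2) = Real.log (1 - Δ) - Real.log 2 :=
    Real.log_div (by linarith) two_ne_zero
  have e3 : Real.log ((F + Δ') / 2) = Real.log (F + Δ') - Real.log 2 :=
    Real.log_div (by linarith) two_ne_zero
  have e4 : Real.log ((F - Δ') / 2) = Real.log (F - Δ') - Real.log 2 :=
    Real.log_div (by linarith) two_ne_zero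
  have e5 : Real.log ((1 + Δ) / (1 - Δ)) = Real.log (1 + Δ) - Real.log (1 - Δ) :=
    Real.log_div (by linarith) (by linarith)
  have e6 : (1 + Δ' / F) / (1 - Δ' / F) = (F + Δ') / (F - Δ') := by
    field_simp
  have e7 : Real.log ((F + Δ') / (F - Δ')) = Real.log (F + Δ') - Real.log (F - Δ') :=
    Real.log_div (by linarith) (by linarith)
  simp only [arctanh, e6, e5, e7, e1, e2, e3, e4]
  field_simp
  ring
end

section
/- Let ρ00, ρ11 ≥ 0 with ρ00 + ρ11 = 1, g ∈ (0,1), and c² ≤ ρ00·ρ11. With Δ = √((ρ11 − ρ00)² + 4c²), F = ρ00 + g·ρ11, and Δ' = √((ρ00 − g·ρ11)² + 4g·c²), for every s ∈ [0,1] one has F² − g·F + s²·(g·F·Δ² − Δ'²) ≥ 0. -/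
/-- for `ρ00, ρ11 ≥ 0` with `ρ00 + ρ11 = 1`, `g ∈ (0,1)`, and
`c² ≤ ρ00·ρ11`, with `Δ = √((ρ11 − ρ00)² + 4c²)`, `F = ρ00 + g ρ11`, and
`Δ' = √((ρ00 − g ρ11)² + 4 g c²)`, for every `s ∈ [0,1]` one has
`F² − g F + s² (g F Δ² − Δ'²) ≥ 0`. -/
theorem integrand_numerator_nonneg (ρ00 ρ11 g c : ℝ)
    (h00 : 0 ≤ ρ00) (h11 : 0 ≤ ρ11) (hsum : ρ00 + ρ11 = 1)
    (hg0 : 0 < g) (hg1 : g < 1) (hc : c ^ 2 ≤ ρ00 * ρ11) :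
    ∀ s ∈ Set.Icc (0 : ℝ) 1,
      0 ≤ (ρ00 + g * ρ11) ^ 2 - g * (ρ00 + g * ρ11)
          + s ^ 2 * (g * (ρ00 + g * ρ11) * (Real.sqrt ((ρ11 - ρ00) ^ 2 + 4 * c ^ 2)) ^ 2
              - (Real.sqrt ((ρ00 - g * ρ11) ^ 2 + 4 * g * c ^ 2)) ^ 2) := by
  intro s hs
  obtain ⟨hs0, hs1⟩ := hs
  have ha : (0:ℝ) ≤ (ρ11 - ρ00) ^ 2 + 4 * c ^ 2 := by positivity
  have hb : (0:ℝ) ≤ (ρ00 - g * ρ11) ^ 2 + 4 * g * c ^ 2 := by positivity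
  rw [Real.sq_sqrt ha, Real.sq_sqrt hb]
  have ht0 : 0 ≤ s ^ 2 := by positivity
  have ht1 : s ^ 2 ≤ 1 := by nlinarith
  have hgl : (0:ℝ) ≤ 1 - g := by linarith
  have hF : (0:ℝ) ≤ ρ00 + g * ρ11 := by positivity
  have h1 : 0 ≤ (1 - s ^ 2) * ((ρ00 + g * ρ11) * ρ00 * (1 - g)) := by
    exact mul_nonneg (by linarith) (mul_nonneg (mul_nonneg hF h00) hgl)
  have h2 : 0 ≤ s ^ 2 * (4 * g * (1 - g) * ρ11 * (ρ00 * ρ11 - c ^ 2)) := by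
    refine mul_nonneg ht0 (mul_nonneg (mul_nonneg (mul_nonneg (by linarith) hgl) h11) (by linarith))
  have key : ρ11 = 1 - ρ00 := by linarith
  have heq : (ρ00 + g * ρ11) ^ 2 - g * (ρ00 + g * ρ11)
          + s ^ 2 * (g * (ρ00 + g * ρ11) * ((ρ11 - ρ00) ^ 2 + 4 * c ^ 2)
              - ((ρ00 - g * ρ11) ^ 2 + 4 * g * c ^ 2))
      = (1 - s ^ 2) * ((ρ00 + g * ρ11) * ρ00 * (1 - g))
        + s ^ 2 * (4 * g * (1 - g) * ρ11 * (ρ00 * ρ11 - c ^ 2)) := by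
    rw [key]; ring
  linarith [h1, h2, heq.ge, heq.le]
end

section
/- Let g ∈ (0,1), a ∈ [−1,1], and c be real with 4c² ≤ 1 − a². Set A = 1 + g, B = 1 − g, F = (A − B·a)/2, Δ² = a² + 4c², and Δ'² = (A·a − B)²/4 + 4g·c². Then E := g·F·Δ² − Δ'² + F·(F − g) ≥ 0, with equality when 4c² = 1 − a². -/
/-- for `g ∈ (0,1)`, `a ∈ [−1,1]`, and `c` with `4c² ≤ 1 − a²`,
setting `A = 1 + g`, `B = 1 − g`, `F = (A − B a)/2`, `Δ² = a² + 4c²`, and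
`Δ'² = (A a − B)²/4 + 4 g c²`, the quantity
`E = g F Δ² − Δ'² + F (F − g)` is nonnegative, with equality on the
pure-state boundary `4c² = 1 − a²`. -/
theorem E_nonneg_and_eq_on_boundary (g a c : ℝ)
    (hg0 : 0 < g) (hg1 : g < 1) (ha : a ∈ Set.Icc (-1 : ℝ) 1)
    (hc : 4 * c ^ 2 ≤ 1 - a ^ 2) :
    0 ≤ g * (((1 + g) - (1 - g) * a) / 2) * (a ^ 2 + 4 * c ^ 2)
        - (((1 + g) * a - (1 - g)) ^ 2 / 4 + 4 * g * c ^ 2)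
        + (((1 + g) - (1 - g) * a) / 2) * ((((1 + g) - (1 - g) * a) / 2) - g)
    ∧ (4 * c ^ 2 = 1 - a ^ 2 →
        g * (((1 + g) - (1 - g) * a) / 2) * (a ^ 2 + 4 * c ^ 2)
          - (((1 + g) * a - (1 - g)) ^ 2 / 4 + 4 * g * c ^ 2)
          + (((1 + g) - (1 - g) * a) / 2) * ((((1 + g) - (1 - g) * a) / 2) - g) = 0) := by
  obtain ⟨ha1, ha2⟩ := ha
  have key : g * (((1 + g) - (1 - g) * a) / 2) * (a ^ 2 + 4 * c ^ 2)
      - (((1 + g) * a - (1 - g)) ^ 2 / 4 + 4 * g * c ^ 2)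
      + (((1 + g) - (1 - g) * a) / 2) * ((((1 + g) - (1 - g) * a) / 2) - g)
      = g * (1 - g) * (1 + a) / 2 * ((1 - a ^ 2) - 4 * c ^ 2) := by ring
  constructor
  · rw [key, div_eq_mul_inv]
    have h1 : (0:ℝ) ≤ g * (1 - g) * (1 + a) * (2:ℝ)⁻¹ := mul_nonneg (mul_nonneg (mul_nonneg hg0.le (by linarith)) (by linarith)) (by norm_num)
    nlinarith
  · intro h
    rw [key, h]
    ring
end

section
/- For fixed ρ00, ρ11 ≥ 0 with ρ00 + ρ11 = 1 and fixed g ∈ (0,1), the single-photon randomness R(c) attains its maximum over 0 ≤ c ≤ √(ρ00·ρ11) at the pure-state boundary c = √(ρ00·ρ11), where its value equals the binary entropy of the detection probability: R(√(ρ00·ρ11)) = −q·log₂ q − (1−q)·log₂(1−q) with q = ρ11·(1−g). -/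
open Real Set

noncomputable def psiE (x : ℝ) : ℝ :=
  Real.log 2 - ((1 + x) * Real.log (1 + x) + (1 - x) * Real.log (1 - x)) / 2

noncomputable def GcE (x : ℝ) : ℝ :=
  2 * x * Real.log 2 - (1 + x) ^ 2 * Real.log (1 + x) / 2
    + (1 - x) ^ 2 * Real.log (1 - x) / 2

lemma cont1 : Continuous fun x : ℝ => (1 + x) * Real.log (1 + x) :=
  Real.continuous_mul_log.comp (continuous_const.add continuous_id)

lemma cont2 : Continuous fun x : ℝ => (1 - x) * Real.log (1 - x) :=
  Real.continuous_mul_log.comp (continuous_const.sub continuous_id)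

lemma psiE_continuous : Continuous psiE :=
  continuous_const.sub ((cont1.add cont2).div_const 2)

lemma GcE_continuous : Continuous GcE := by
  have h : GcE = fun x => 2 * x * Real.log 2 - (1 + x) * ((1 + x) * Real.log (1 + x)) / 2
      + (1 - x) * ((1 - x) * Real.log (1 - x)) / 2 := by
    funext x; unfold GcE; ring
  rw [h]
  fun_prop

lemma hd1 {x : ℝ} (h : (1:ℝ) + x ≠ 0) :
    HasDerivAt (fun x : ℝ => (1 + x) * Real.log (1 + x)) (Real.log (1 + x) + 1) x := by
  have hi : HasDerivAt (fun x : ℝ => 1 + x) 1 x := (hasDerivAt_id x).const_add 1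
  have := (Real.hasDerivAt_mul_log h).comp x hi
  simpa [Function.comp_def] using this

lemma hd2 {x : ℝ} (h : (1:ℝ) - x ≠ 0) :
    HasDerivAt (fun x : ℝ => (1 - x) * Real.log (1 - x)) (-(Real.log (1 - x) + 1)) x := by
  have hi : HasDerivAt (fun x : ℝ => 1 - x) (-1) x := (hasDerivAt_id x).const_sub 1
  have := (Real.hasDerivAt_mul_log h).comp x hi
  simpa [Function.comp_def] using this

lemma psiE_hasDerivAt {x : ℝ} (h1 : (1:ℝ) + x ≠ 0) (h2 : (1:ℝ) - x ≠ 0) :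
    HasDerivAt psiE ((Real.log (1 - x) - Real.log (1 + x)) / 2) x := by
  have := (((hd1 h1).add (hd2 h2)).div_const 2).const_sub (Real.log 2)
  refine this.congr_deriv ?_
  ring

lemma hdsq {t : ℝ} (h : t ≠ 0) :
    HasDerivAt (fun t : ℝ => t ^ 2 * Real.log t) (2 * t * Real.log t + t) t := by
  have := (hasDerivAt_pow 2 t).mul (Real.hasDerivAt_log h)
  refine this.congr_deriv ?_
  field_simp
  ring

lemma hd1sq {x : ℝ} (h : (1:ℝ) + x ≠ 0) :
    HasDerivAt (fun x : ℝ => (1 + x) ^ 2 * Real.log (1 + x))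
      (2 * (1 + x) * Real.log (1 + x) + (1 + x)) x := by
  have hi : HasDerivAt (fun x : ℝ => 1 + x) 1 x := (hasDerivAt_id x).const_add 1
  have := (hdsq h).comp x hi
  simpa [Function.comp_def] using this

lemma hd2sq {x : ℝ} (h : (1:ℝ) - x ≠ 0) :
    HasDerivAt (fun x : ℝ => (1 - x) ^ 2 * Real.log (1 - x))
      (-(2 * (1 - x) * Real.log (1 - x) + (1 - x))) x := by
  have hi : HasDerivAt (fun x : ℝ => 1 - x) (-1) x := (hasDerivAt_id x).const_sub 1
  have := (hdsq h).comp x hi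
  simpa [Function.comp_def] using this

lemma psiE_one : psiE 1 = 0 := by
  unfold psiE
  norm_num [Real.log_zero]

lemma psiE_antitoneOn : AntitoneOn psiE (Icc (0:ℝ) 1) := by
  apply antitoneOn_of_deriv_nonpos (convex_Icc 0 1) psiE_continuous.continuousOn
  · intro z hz
    rw [interior_Icc] at hz
    exact (psiE_hasDerivAt (by nlinarith [hz.1, hz.2]) (by nlinarith [hz.2])).differentiableAt.differentiableWithinAt
  · intro z hz
    rw [interior_Icc] at hz
    rw [(psiE_hasDerivAt (by nlinarith [hz.1, hz.2]) (by nlinarith [hz.2])).deriv]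
    have : Real.log (1 - z) ≤ Real.log (1 + z) :=
      Real.log_le_log (by linarith [hz.2]) (by linarith [hz.1])
    linarith

lemma psiE_nonneg {x : ℝ} (hx : x ∈ Icc (0:ℝ) 1) : 0 ≤ psiE x := by
  have := psiE_antitoneOn hx (right_mem_Icc.2 one_pos.le) hx.2
  rw [psiE_one] at this
  exact this

lemma GcE_concave : ConcaveOn ℝ (Icc (0:ℝ) 1) GcE := by
  apply concaveOn_of_hasDerivWithinAt2_nonpos (f' := fun x =>
      2 * Real.log 2 - 1 - (1 + x) * Real.log (1 + x) - (1 - x) * Real.log (1 - x))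
    (f'' := fun x => Real.log (1 - x) - Real.log (1 + x))
    (convex_Icc 0 1) GcE_continuous.continuousOn
  · intro z hz
    rw [interior_Icc] at hz
    have h1 : (1:ℝ) + z ≠ 0 := by nlinarith [hz.1, hz.2]
    have h2 : (1:ℝ) - z ≠ 0 := by nlinarith [hz.2]
    have : HasDerivAt GcE
        (2 * Real.log 2 - 1 - (1 + z) * Real.log (1 + z) - (1 - z) * Real.log (1 - z)) z := by
      have := (((hasDerivAt_id z).const_mul 2 |>.mul_const (Real.log 2)).sub
        ((hd1sq h1).div_const 2)).add ((hd2sq h2).div_const 2)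
      refine this.congr_deriv ?_
      ring
    exact this.hasDerivWithinAt
  · intro z hz
    rw [interior_Icc] at hz
    have h1 : (1:ℝ) + z ≠ 0 := by nlinarith [hz.1, hz.2]
    have h2 : (1:ℝ) - z ≠ 0 := by nlinarith [hz.2]
    have : HasDerivAt (fun x =>
        2 * Real.log 2 - 1 - (1 + x) * Real.log (1 + x) - (1 - x) * Real.log (1 - x))
        (Real.log (1 - z) - Real.log (1 + z)) z := by
      have := ((hasDerivAt_const z (2 * Real.log 2 - 1)).sub (hd1 h1)).sub (hd2 h2)
      refine this.congr_deriv ?_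
      ring
    exact this.hasDerivWithinAt
  · intro z hz
    rw [interior_Icc] at hz
    have : Real.log (1 - z) ≤ Real.log (1 + z) :=
      Real.log_le_log (by linarith [hz.2]) (by linarith [hz.1])
    linarith

lemma GcE_zero : GcE 0 = 0 := by unfold GcE; norm_num

lemma GcE_one : GcE 1 = 0 := by
  unfold GcE
  norm_num [Real.log_zero]
  ring

lemma GcE_nonneg {x : ℝ} (hx : x ∈ Icc (0:ℝ) 1) : 0 ≤ GcE x := by
  have h := GcE_concave.2 (left_mem_Icc.2 one_pos.le) (right_mem_Icc.2 one_pos.le)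
    (sub_nonneg.2 hx.2) hx.1 (by ring)
  simp only [smul_eq_mul, GcE_zero, GcE_one, mul_zero, add_zero, mul_one, zero_add] at h
  calc (0:ℝ) = (1-x)*0 + x*0 := by ring
  _ ≤ _ := by simp only [mul_zero, add_zero]; exact h

lemma ratioE {y x : ℝ} (hy0 : 0 ≤ y) (hyx : y ≤ x) (hx1 : x ≤ 1) :
    (1 - x ^ 2) * psiE y ≤ (1 - y ^ 2) * psiE x := by
  rcases eq_or_lt_of_le hx1 with h1 | hxlt
  · subst h1
    rw [psiE_one]
    norm_num
  · -- x < 1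
    set f : ℝ → ℝ := fun z => psiE z / (1 - z ^ 2) with hf
    have hmono : MonotoneOn f (Icc 0 x) := by
      apply monotoneOn_of_deriv_nonneg (convex_Icc 0 x)
      · apply ContinuousOn.div psiE_continuous.continuousOn
        · fun_prop
        · intro z hz
          have : z < 1 := lt_of_le_of_lt hz.2 hxlt
          nlinarith [hz.1]
      · intro z hz
        rw [interior_Icc] at hz
        have hz1 : z < 1 := hz.2.trans hxlt
        have h1 : (1:ℝ) + z ≠ 0 := by nlinarith [hz.1]
        have h2 : (1:ℝ) - z ≠ 0 := by nlinarith
        have hden : (1:ℝ) - z ^ 2 ≠ 0 := by nlinarith [hz.1]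
        exact ((psiE_hasDerivAt h1 h2).div
          ((hasDerivAt_pow 2 z).const_sub 1) hden).differentiableAt.differentiableWithinAt
      · intro z hz
        rw [interior_Icc] at hz
        have hz1 : z < 1 := hz.2.trans hxlt
        have h1 : (1:ℝ) + z ≠ 0 := by nlinarith [hz.1]
        have h2 : (1:ℝ) - z ≠ 0 := by nlinarith
        have hden : (1:ℝ) - z ^ 2 ≠ 0 := by nlinarith [hz.1]
        have hder := (psiE_hasDerivAt h1 h2).div
          ((hasDerivAt_pow 2 z).const_sub 1) hden
        rw [show f = psiE / fun x => 1 - x ^ 2 from rfl, hder.deriv]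
        apply div_nonneg _ (by positivity)
        have hnum : (Real.log (1 - z) - Real.log (1 + z)) / 2 * (1 - z ^ 2)
            - psiE z * -((2:ℕ) * z ^ (2 - 1)) = GcE z := by
          push_cast
          norm_num
          unfold psiE GcE; ring
        rw [hnum]
        exact GcE_nonneg ⟨hz.1.le, by linarith⟩
    have := hmono (show y ∈ Icc 0 x from ⟨hy0, hyx⟩)
      (show x ∈ Icc 0 x from ⟨le_trans hy0 hyx, le_refl x⟩) hyx
    have hdy : (0:ℝ) < 1 - y ^ 2 := by nlinarith [lt_of_le_of_lt hyx hxlt]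
    have hdx : (0:ℝ) < 1 - x ^ 2 := by nlinarith [le_trans hy0 hyx]
    rw [hf] at this
    simp only [div_le_div_iff₀ hdy hdx] at this
    linarith

lemma keyE {F g x y : ℝ} (hg : 0 < g) (hgF : g ≤ F) (hF1 : F ≤ 1)
    (hx : x ∈ Icc (0:ℝ) 1) (hy : y ∈ Icc (0:ℝ) 1)
    (hrel : F ^ 2 * (1 - y ^ 2) = g * (1 - x ^ 2)) :
    F * psiE y ≤ psiE x := by
  have hF0 : 0 < F := lt_of_lt_of_le hg hgF
  have h1x2 : 0 ≤ 1 - x ^ 2 := by nlinarith [hx.1, hx.2]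
  have h1y2 : 0 ≤ 1 - y ^ 2 := by nlinarith [hy.1, hy.2]
  rcases le_or_gt g (F ^ 2) with hcase | hcase
  · -- g ≤ F², so y ≥ x and use monotonicity
    have hsq : x ^ 2 ≤ y ^ 2 := by
      have h2 : F ^ 2 * (1 - y ^ 2) ≤ F ^ 2 * (1 - x ^ 2) := by
        rw [hrel]; exact mul_le_mul_of_nonneg_right hcase h1x2
      nlinarith [mul_pos hF0 hF0]
    have hxy : x ≤ y := by nlinarith [hx.1, hy.1, sq_nonneg (x + y), sq_nonneg (x - y)]
    have h1 : psiE y ≤ psiE x := psiE_antitoneOn hx hy hxy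
    nlinarith [psiE_nonneg hy]
  · -- F² < g, so y ≤ x
    have hsq : y ^ 2 ≤ x ^ 2 := by
      have h2 : F ^ 2 * (1 - x ^ 2) ≤ F ^ 2 * (1 - y ^ 2) := by
        rw [hrel]; exact mul_le_mul_of_nonneg_right hcase.le h1x2
      nlinarith [mul_pos hF0 hF0]
    have hyx : y ≤ x := by nlinarith [hx.1, hy.1, sq_nonneg (x + y), sq_nonneg (x - y)]
    rcases eq_or_lt_of_le hy.2 with hy1 | hy1
    · rw [hy1, psiE_one]
      simpa using psiE_nonneg hx
    · have hr := ratioE hy.1 hyx hx.2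
      have hdy : (0:ℝ) < 1 - y ^ 2 := by nlinarith [hy.1]
      -- (1-x²) = F²(1-y²)/g
      have h2 : F ^ 2 * ((1 - y ^ 2) * psiE y) ≤ g * ((1 - y ^ 2) * psiE x) := by
        calc F ^ 2 * ((1 - y ^ 2) * psiE y) = g * ((1 - x ^ 2) * psiE y) := by
              rw [← mul_assoc, hrel]; ring
        _ ≤ g * ((1 - y ^ 2) * psiE x) := by
              apply mul_le_mul_of_nonneg_left hr hg.le
      have h3 : F ^ 2 * psiE y ≤ g * psiE x := by
        have h2' : (1 - y ^ 2) * (F ^ 2 * psiE y) ≤ (1 - y ^ 2) * (g * psiE x) := by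
          nlinarith [h2]
        exact le_of_mul_le_mul_left h2' hdy
      nlinarith [h3, mul_le_mul_of_nonneg_right hgF (psiE_nonneg hx), hF0, psiE_nonneg hy]

lemma half_logE {u : ℝ} (hu : 0 ≤ u) :
    u / 2 * Real.log (u / 2) = (u * Real.log u - u * Real.log 2) / 2 := by
  rcases hu.eq_or_lt with h | h
  · simp [← h]
  · rw [Real.log_div h.ne' two_ne_zero]; ring

lemma entsumE {x : ℝ} (hx0 : 0 ≤ x) (hx1 : x ≤ 1) :
    (1 + x) / 2 * Real.log ((1 + x) / 2) + (1 - x) / 2 * Real.log ((1 - x) / 2)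
      = -psiE x := by
  rw [half_logE (by linarith : (0:ℝ) ≤ 1 + x), half_logE (by linarith : (0:ℝ) ≤ 1 - x)]
  unfold psiE; ring

lemma mul_log_split {F v : ℝ} (hF : 0 < F) (hv : 0 ≤ v) :
    (F * v) * Real.log (F * v) = F * v * Real.log F + F * (v * Real.log v) := by
  rcases hv.eq_or_lt with h | h
  · simp [← h]
  · rw [Real.log_mul hF.ne' h.ne']; ring

lemma musumE {F y : ℝ} (hF : 0 < F) (hy0 : 0 ≤ y) (hy1 : y ≤ 1) :
    (F * ((1 + y) / 2)) * Real.log (F * ((1 + y) / 2))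
      + (F * ((1 - y) / 2)) * Real.log (F * ((1 - y) / 2))
      = F * Real.log F - F * psiE y := by
  rw [mul_log_split hF (by linarith : (0:ℝ) ≤ (1 + y) / 2),
      mul_log_split hF (by linarith : (0:ℝ) ≤ (1 - y) / 2)]
  have h := entsumE hy0 hy1
  linear_combination F * h

lemma RandSP_def (ρ00 ρ11 g c : ℝ) : RandSP ρ00 ρ11 g c =
    -(-(((1 + Real.sqrt ((ρ11 - ρ00) ^ 2 + 4 * c ^ 2)) / 2) *
        Real.logb 2 ((1 + Real.sqrt ((ρ11 - ρ00) ^ 2 + 4 * c ^ 2)) / 2))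
      - ((1 - Real.sqrt ((ρ11 - ρ00) ^ 2 + 4 * c ^ 2)) / 2) *
        Real.logb 2 ((1 - Real.sqrt ((ρ11 - ρ00) ^ 2 + 4 * c ^ 2)) / 2))
    - ρ11 * (1 - g) * Real.logb 2 (ρ11 * (1 - g))
    - ((ρ00 + g * ρ11) + Real.sqrt ((ρ00 - g * ρ11) ^ 2 + 4 * g * c ^ 2)) / 2 *
        Real.logb 2 (((ρ00 + g * ρ11) + Real.sqrt ((ρ00 - g * ρ11) ^ 2 + 4 * g * c ^ 2)) / 2)
    - ((ρ00 + g * ρ11) - Real.sqrt ((ρ00 - g * ρ11) ^ 2 + 4 * g * c ^ 2)) / 2 *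
        Real.logb 2 (((ρ00 + g * ρ11) - Real.sqrt ((ρ00 - g * ρ11) ^ 2 + 4 * g * c ^ 2)) / 2) := rfl

lemma expandE (A B q μ1 μ2 : ℝ) :
    (-(-(A * Real.logb 2 A) - B * Real.logb 2 B) - q * Real.logb 2 q
      - μ1 * Real.logb 2 μ1 - μ2 * Real.logb 2 μ2) * Real.log 2
    = (A * Real.log A + B * Real.log B) - q * Real.log q
      - μ1 * Real.log μ1 - μ2 * Real.log μ2 := by
  have h2 : Real.log 2 ≠ 0 := (Real.log_pos one_lt_two).ne'
  simp only [Real.logb]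
  field_simp
  ring

lemma randSP_eq (ρ00 ρ11 g c : ℝ)
    (h00 : 0 ≤ ρ00) (h11 : 0 ≤ ρ11) (hsum : ρ00 + ρ11 = 1)
    (hg0 : 0 < g) (hg1 : g < 1) (hc2 : c ^ 2 ≤ ρ00 * ρ11) :
    RandSP ρ00 ρ11 g c * Real.log 2 =
      -psiE (Real.sqrt ((ρ11 - ρ00) ^ 2 + 4 * c ^ 2))
      - ρ11 * (1 - g) * Real.log (ρ11 * (1 - g))
      - (ρ00 + g * ρ11) * Real.log (ρ00 + g * ρ11)
      + (ρ00 + g * ρ11) *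
          psiE (Real.sqrt ((ρ00 - g * ρ11) ^ 2 + 4 * g * c ^ 2) / (ρ00 + g * ρ11)) := by
  have hF0 : 0 < ρ00 + g * ρ11 := by nlinarith
  rw [RandSP_def]
  set x := Real.sqrt ((ρ11 - ρ00) ^ 2 + 4 * c ^ 2) with hxd
  set d := Real.sqrt ((ρ00 - g * ρ11) ^ 2 + 4 * g * c ^ 2) with hdd
  set F := ρ00 + g * ρ11 with hFd
  have hx0 : 0 ≤ x := Real.sqrt_nonneg _
  have hx1 : x ≤ 1 := by
    rw [Real.sqrt_le_one]
    nlinarith [sq_nonneg c]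
  have hd0 : 0 ≤ d := Real.sqrt_nonneg _
  have hdF : d ≤ F := by
    have : (ρ00 - g * ρ11) ^ 2 + 4 * g * c ^ 2 ≤ F ^ 2 := by
      rw [hFd]; nlinarith
    calc d ≤ Real.sqrt (F ^ 2) := Real.sqrt_le_sqrt this
    _ = F := Real.sqrt_sq hF0.le
  have hy0 : 0 ≤ d / F := div_nonneg hd0 hF0.le
  have hy1 : d / F ≤ 1 := (div_le_one hF0).2 hdF
  have hmu1 : (F + d) / 2 = F * ((1 + d / F) / 2) := by field_simp
  have hmu2 : (F - d) / 2 = F * ((1 - d / F) / 2) := by field_simp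
  rw [hmu1, hmu2, expandE]
  linear_combination entsumE hx0 hx1 - musumE hF0 hy0 hy1


/-- for fixed `ρ00, ρ11 ≥ 0` with `ρ00 + ρ11 = 1` and `g ∈ (0,1)`,
the single-photon randomness attains its maximum over `[0, √(ρ00 ρ11)]` at the
pure-state boundary `c = √(ρ00 ρ11)`, where its value equals the binary entropy
of the detection probability `q = ρ11 (1−g)`. -/
theorem randSP_max_at_boundary (ρ00 ρ11 g : ℝ)
    (h00 : 0 ≤ ρ00) (h11 : 0 ≤ ρ11) (hsum : ρ00 + ρ11 = 1)
    (hg0 : 0 < g) (hg1 : g < 1) :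
    (∀ c ∈ Set.Icc 0 (Real.sqrt (ρ00 * ρ11)),
        RandSP ρ00 ρ11 g c ≤ RandSP ρ00 ρ11 g (Real.sqrt (ρ00 * ρ11)))
    ∧ RandSP ρ00 ρ11 g (Real.sqrt (ρ00 * ρ11))
        = -(ρ11 * (1 - g)) * Real.logb 2 (ρ11 * (1 - g))
          - (1 - ρ11 * (1 - g)) * Real.logb 2 (1 - ρ11 * (1 - g)) := by
  have hl2 : (0:ℝ) < Real.log 2 := Real.log_pos one_lt_two
  have hab : 0 ≤ ρ00 * ρ11 := mul_nonneg h00 h11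
  have hF0 : 0 < ρ00 + g * ρ11 := by nlinarith
  have hc2b : (Real.sqrt (ρ00 * ρ11)) ^ 2 ≤ ρ00 * ρ11 := by
    rw [Real.sq_sqrt hab]
  -- boundary arguments of psiE are 1
  have ex1 : Real.sqrt ((ρ11 - ρ00) ^ 2 + 4 * (Real.sqrt (ρ00 * ρ11)) ^ 2) = 1 := by
    rw [Real.sq_sqrt hab,
      show (ρ11 - ρ00) ^ 2 + 4 * (ρ00 * ρ11) = 1 by linear_combination (ρ00 + ρ11 + 1) * hsum]
    exact Real.sqrt_one
  have ey1 : Real.sqrt ((ρ00 - g * ρ11) ^ 2 + 4 * g * (Real.sqrt (ρ00 * ρ11)) ^ 2)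
      / (ρ00 + g * ρ11) = 1 := by
    rw [Real.sq_sqrt hab,
      show (ρ00 - g * ρ11) ^ 2 + 4 * g * (ρ00 * ρ11) = (ρ00 + g * ρ11) ^ 2 by ring,
      Real.sqrt_sq hF0.le]
    field_simp
  have hbnd := randSP_eq ρ00 ρ11 g (Real.sqrt (ρ00 * ρ11)) h00 h11 hsum hg0 hg1 hc2b
  rw [ex1, ey1, psiE_one] at hbnd
  constructor
  · intro c hc
    have hc2 : c ^ 2 ≤ ρ00 * ρ11 := by
      calc c ^ 2 ≤ (Real.sqrt (ρ00 * ρ11)) ^ 2 := by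
            apply pow_le_pow_left₀ hc.1 hc.2
      _ = ρ00 * ρ11 := Real.sq_sqrt hab
    have hcc := randSP_eq ρ00 ρ11 g c h00 h11 hsum hg0 hg1 hc2
    -- key inequality hypotheses
    have hgF : g ≤ ρ00 + g * ρ11 := by nlinarith
    have hF1 : ρ00 + g * ρ11 ≤ 1 := by nlinarith
    have hx0 : 0 ≤ Real.sqrt ((ρ11 - ρ00) ^ 2 + 4 * c ^ 2) := Real.sqrt_nonneg _
    have hx1 : Real.sqrt ((ρ11 - ρ00) ^ 2 + 4 * c ^ 2) ≤ 1 := by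
      rw [Real.sqrt_le_one]
      nlinarith [sq_nonneg c]
    have hd0 : 0 ≤ Real.sqrt ((ρ00 - g * ρ11) ^ 2 + 4 * g * c ^ 2) := Real.sqrt_nonneg _
    have hdF : Real.sqrt ((ρ00 - g * ρ11) ^ 2 + 4 * g * c ^ 2) ≤ ρ00 + g * ρ11 := by
      have h : (ρ00 - g * ρ11) ^ 2 + 4 * g * c ^ 2 ≤ (ρ00 + g * ρ11) ^ 2 := by nlinarith
      calc Real.sqrt ((ρ00 - g * ρ11) ^ 2 + 4 * g * c ^ 2)
          ≤ Real.sqrt ((ρ00 + g * ρ11) ^ 2) := Real.sqrt_le_sqrt h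
      _ = ρ00 + g * ρ11 := Real.sqrt_sq hF0.le
    have hrel : (ρ00 + g * ρ11) ^ 2 *
        (1 - (Real.sqrt ((ρ00 - g * ρ11) ^ 2 + 4 * g * c ^ 2) / (ρ00 + g * ρ11)) ^ 2)
        = g * (1 - (Real.sqrt ((ρ11 - ρ00) ^ 2 + 4 * c ^ 2)) ^ 2) := by
      have h0 : (ρ00 + g * ρ11) ^ 2 *
          (1 - (Real.sqrt ((ρ00 - g * ρ11) ^ 2 + 4 * g * c ^ 2) / (ρ00 + g * ρ11)) ^ 2)
          = (ρ00 + g * ρ11) ^ 2 - (Real.sqrt ((ρ00 - g * ρ11) ^ 2 + 4 * g * c ^ 2)) ^ 2 := by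
        field_simp
      rw [h0, Real.sq_sqrt (by positivity : (0:ℝ) ≤ (ρ00 - g * ρ11) ^ 2 + 4 * g * c ^ 2),
        Real.sq_sqrt (by positivity : (0:ℝ) ≤ (ρ11 - ρ00) ^ 2 + 4 * c ^ 2)]
      linear_combination (g * (ρ00 + ρ11 + 1)) * hsum
    have hkey := keyE hg0 hgF hF1 ⟨hx0, hx1⟩
      ⟨div_nonneg hd0 hF0.le, (div_le_one hF0).2 hdF⟩ hrel
    have hmul : RandSP ρ00 ρ11 g c * Real.log 2
        ≤ RandSP ρ00 ρ11 g (Real.sqrt (ρ00 * ρ11)) * Real.log 2 := by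
      rw [hcc, hbnd]
      have hpx := psiE_nonneg (x := Real.sqrt ((ρ11 - ρ00) ^ 2 + 4 * c ^ 2)) ⟨hx0, hx1⟩
      linarith [hkey]
    exact le_of_mul_le_mul_right hmul hl2
  · have h1q : 1 - ρ11 * (1 - g) = ρ00 + g * ρ11 := by linear_combination -hsum
    rw [h1q]
    apply mul_right_cancel₀ hl2.ne'
    rw [hbnd]
    have h2 : Real.log 2 ≠ 0 := hl2.ne'
    simp only [Real.logb]
    field_simp
    ring
end
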